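/- arXiv:2402.05242 — 11 statements merged into one kernel-verified Lean document; each statement's English description precedes it below -/
import Mathlib

section
/- Let C ⊆ ℕ^d be an affine semigroup and let S be a submonoid of C such that C \ S is a finite set. Then S is finitely generated (hence S is itself an affine semigroup). -/
/-! Grade `ℕ^d` by the coordinate sum. If `N` bounds the degrees of the finitely many elements
of `C \ S`, every element of `C` of degree `> N` lies in `S`. Write an element of `S` of degree
`> 2N + m`, where `m` bounds the degrees of the generators of `C`, as a sum of generators: some
prefix of the sum has degree in `(N, N + m]`, so both the prefix and the remaining suffix have
degree `> N` and lie in `S`. By induction on the degree, `S` is generated by its finitely many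
elements of degree `≤ 2N + m`. -/

open AddSubmonoid

theorem List.exists_lt_sum_take_le {l : List ℕ} {m N : ℕ} (hm : ∀ a ∈ l, a ≤ m)
    (hN : N < l.sum) : ∃ k, N < (l.take k).sum ∧ (l.take k).sum ≤ N + m := by
  induction l generalizing N with
  | nil => simp at hN
  | cons a t ih =>
    simp only [List.mem_cons, forall_eq_or_imp] at hm
    by_cases ha : N < a
    · exact ⟨1, by simpa using ha, by simpa using le_add_left hm.1⟩
    · simp only [List.sum_cons] at hN
      obtain ⟨k, hk₁, hk₂⟩ := ih (N := N - a) hm.2 (by omega)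
      exact ⟨k + 1, by simp only [List.take_succ_cons, List.sum_cons]; omega,
        by simp only [List.take_succ_cons, List.sum_cons]; omega⟩

section Degree

variable {M : Type*} [AddCommMonoid M] (f : M →+ ℕ) {G : Set M} {m N : ℕ}

theorem AddSubmonoid.exists_add_of_mem_closure (hm : ∀ g ∈ G, f g ≤ m) {x : M}
    (hx : x ∈ closure G) (hN : N < f x) :
    ∃ p ∈ closure G, ∃ q ∈ closure G, x = p + q ∧ N < f p ∧ f p ≤ N + m := by
  obtain ⟨l, hlG, rfl⟩ := exists_list_of_mem_closure hx
  have hsum_mem : ∀ l' : List M, l'.Sublist l → l'.sum ∈ closure G := fun l' hl' =>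
    _root_.list_sum_mem fun y hy => subset_closure (hlG y (hl'.subset hy))
  rw [map_list_sum] at hN
  obtain ⟨k, hk₁, hk₂⟩ := List.exists_lt_sum_take_le
    (by simpa using fun y hy => hm y (hlG y hy)) hN
  rw [← List.map_take, ← map_list_sum] at hk₁ hk₂
  exact ⟨_, hsum_mem _ (List.take_sublist k l), _, hsum_mem _ (List.drop_sublist k l),
    (List.sum_take_add_sum_drop l k).symm, hk₁, hk₂⟩

theorem AddSubmonoid.le_closure_degree_le_of_forall_lt_mem {S : AddSubmonoid M}
    (hm : ∀ g ∈ G, f g ≤ m) (hSG : S ≤ closure G)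
    (hbig : ∀ x ∈ closure G, N < f x → x ∈ S) :
    S ≤ closure {x | x ∈ S ∧ f x ≤ 2 * N + m} := by
  intro x hxS
  induction hn : f x using Nat.strong_induction_on generalizing x with
  | _ n ih =>
    by_cases hsmall : f x ≤ 2 * N + m
    · exact subset_closure ⟨hxS, hsmall⟩
    obtain ⟨p, hp, q, hq, rfl, hp₁, hp₂⟩ :=
      exists_add_of_mem_closure f hm (hSG hxS) (N := N) (by omega)
    rw [map_add] at hsmall hn
    have hqS : q ∈ S := hbig q hq (by omega)
    exact add_mem (subset_closure ⟨hbig p hp hp₁, by omega⟩) (ih (f q) (by omega) hqS rfl)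

end Degree

def Pi.coordSum (ι : Type*) [Fintype ι] : (ι → ℕ) →+ ℕ :=
  ∑ i, Pi.evalAddMonoidHom (fun _ : ι => ℕ) i

theorem Pi.coordSum_apply {ι : Type*} [Fintype ι] (x : ι → ℕ) :
    Pi.coordSum ι x = ∑ i, x i := by
  simp [Pi.coordSum]

theorem Pi.finite_setOf_coordSum_le (ι : Type*) [Fintype ι] (B : ℕ) :
    {x : ι → ℕ | Pi.coordSum ι x ≤ B}.Finite := by
  refine (Set.Finite.pi fun _ => Set.finite_Iic B).subset fun x hx i _ => ?_
  rw [Set.mem_ofPred_eq, Pi.coordSum_apply] at hx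
  exact (Finset.single_le_sum (fun j _ => Nat.zero_le (x j)) (Finset.mem_univ i)).trans hx

/-- Let `C ⊆ ℕ^d` be an affine semigroup (a finitely generated submonoid of `ℕ^d`)
and let `S` be a submonoid of `C` such that `C \ S` is finite.
Then `S` is finitely generated. -/
theorem stmt0 {d : ℕ} (C S : AddSubmonoid (Fin d → ℕ)) (hC : C.FG) (hSC : S ≤ C)
    (hfin : ((C : Set (Fin d → ℕ)) \ (S : Set (Fin d → ℕ))).Finite) : S.FG := by
  obtain ⟨G, rfl⟩ := hC
  set f := Pi.coordSum (Fin d)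
  have hbig : ∀ x ∈ AddSubmonoid.closure (G : Set (Fin d → ℕ)),
      hfin.toFinset.sup f < f x → x ∈ S :=
    fun x hxC hx => by_contra fun hxS =>
      (Finset.le_sup (f := f) (hfin.mem_toFinset.2 ⟨hxC, hxS⟩)).not_gt hx
  have hle := le_closure_degree_le_of_forall_lt_mem f (fun g hg => Finset.le_sup hg) hSC hbig
  refine (fg_iff S).2 ⟨_, le_antisymm (closure_le.2 fun x hx => hx.1) hle, ?_⟩
  exact (Pi.finite_setOf_coordSum_le (Fin d) _).subset fun x hx => hx.2
end

section
/- Let C ⊆ ℕ^d be the additive submonoid generated by {g_1, g_2, …, g_n}, where g_j ≠ 0 for all j and g_j ≠ g_1 for all j ≥ 2. Suppose that g_1 cannot be written as a + b with a, b ∈ C \ {0}. Then C \ {g_1} is the additive submonoid of ℕ^d generated by {g_2, …, g_n} ∪ {g_1 + g_2, …, g_1 + g_n} ∪ {2g_1, 3g_1}. -/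
/-!
Let `S` be the new generating set. Every `x ∈ C` other than `0` and `g` lies in `⟨S⟩`: `⟨S⟩`
absorbs `g + x` for every nonzero `x ∈ ⟨S⟩` (on generators, `g + (g + t) = 2g + t` and
`g + 3g = 2g + 2g`), so `{g} ∪ ⟨S⟩` is closed under addition. Conversely, minimality of `g`
makes `C \ {g}` a submonoid, and it contains `S`: `g + t`, `2g = g + g` and `3g = g + 2g` are
sums of two nonzero elements of `C`.
-/

namespace AddSubmonoid

variable {M : Type*} [AddCommMonoid M]

def IsMinimalGenerator (C : AddSubmonoid M) (g : M) : Prop :=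
  g ∈ C ∧ g ≠ 0 ∧ ∀ a ∈ C, ∀ b ∈ C, a + b = g → a = 0 ∨ b = 0

def eraseGenerators (g : M) (T : Set M) : Set M :=
  T ∪ (g + ·) '' T ∪ {2 • g, 3 • g}

def eraseMinimalGenerator {C : AddSubmonoid M} {g : M} (hg : C.IsMinimalGenerator g) :
    AddSubmonoid M where
  carrier := (C : Set M) \ {g}
  zero_mem' := ⟨C.zero_mem, fun h => hg.2.1 (Set.mem_singleton_iff.mp h).symm⟩
  add_mem' := by
    rintro a b ⟨haC, ha⟩ ⟨hbC, hb⟩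
    refine ⟨C.add_mem haC hbC, fun hab => ?_⟩
    rcases hg.2.2 a haC b hbC hab with rfl | rfl
    · exact hb (by simpa using hab)
    · exact ha (by simpa using hab)

theorem eq_zero_or_add_mem_closure_eraseGenerators (g : M) (T : Set M) {x : M}
    (hx : x ∈ closure (eraseGenerators g T)) :
    x = 0 ∨ g + x ∈ closure (eraseGenerators g T) := by
  have h2 : 2 • g ∈ closure (eraseGenerators g T) := subset_closure (Or.inr (Or.inl rfl))
  induction hx using closure_induction with
  | mem s hs =>
    right
    rcases hs with (ht | ⟨t, ht, rfl⟩) | hs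
    · exact subset_closure (Or.inl (Or.inr ⟨s, ht, rfl⟩))
    · rw [← add_assoc, ← two_nsmul]
      exact add_mem h2 (subset_closure (Or.inl (Or.inl ht)))
    · rcases hs with rfl | rfl
      · rw [← succ_nsmul']
        exact subset_closure (Or.inr (Or.inr rfl))
      · rw [← succ_nsmul', show 3 + 1 = 2 + 2 from rfl, add_nsmul]
        exact add_mem h2 h2
  | zero => exact Or.inl rfl
  | add a b _ hb iha ihb =>
    rcases iha with rfl | ha
    · simpa using ihb
    · right
      rw [← add_assoc]
      exact add_mem ha hb

theorem closure_insert_subset_insert_closure_eraseGenerators (g : M) (T : Set M) :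
    (closure (insert g T) : Set M) ⊆ insert g (closure (eraseGenerators g T)) := by
  let D := closure (eraseGenerators g T)
  have g_add_mem : ∀ x ∈ insert g (D : Set M), g + x ∈ insert g (D : Set M) := by
    rintro x (rfl | hx)
    · exact Or.inr (two_nsmul x ▸ subset_closure (Or.inr (Or.inl rfl)))
    · rcases eq_zero_or_add_mem_closure_eraseGenerators g T hx with rfl | h
      · exact Or.inl (add_zero g)
      · exact Or.inr h
  let E : AddSubmonoid M :=
    { carrier := insert g D
      zero_mem' := Or.inr D.zero_mem
      add_mem' := by
        rintro a b (ha | ha) hb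
        · exact ha ▸ g_add_mem b hb
        · rcases hb with hb | hb
          · rw [hb, add_comm]
            exact g_add_mem a (Or.inr ha)
          · exact Or.inr (D.add_mem ha hb) }
  have hTE : insert g T ⊆ E :=
    Set.insert_subset_insert fun t ht => subset_closure (Or.inl (Or.inl ht))
  exact closure_le.mpr hTE

variable [Subsingleton (AddUnits M)]

theorem eraseGenerators_subset {C : AddSubmonoid M} {g : M} (hg : C.IsMinimalGenerator g)
    {T : Set M} (hTC : T ⊆ C) (hT0 : 0 ∉ T) (hTg : g ∉ T) :
    eraseGenerators g T ⊆ (C : Set M) \ {g} := by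
  obtain ⟨hgC, hg0, hmin⟩ := hg
  have not_add_eq {a b : M} (ha : a ∈ C) (hb : b ∈ C) (ha0 : a ≠ 0) (hb0 : b ≠ 0) :
      a + b ∉ ({g} : Set M) :=
    fun h => (hmin a ha b hb h).elim ha0 hb0
  have h2C : 2 • g ∈ C := C.nsmul_mem hgC 2
  have h20 : 2 • g ≠ 0 := fun h => hg0 (add_eq_zero.mp (two_nsmul g ▸ h)).1
  rintro x ((ht | ⟨t, ht, rfl⟩) | hx)
  · exact ⟨hTC ht, fun h => hTg (Set.mem_singleton_iff.mp h ▸ ht)⟩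
  · exact ⟨C.add_mem hgC (hTC ht), not_add_eq hgC (hTC ht) hg0 fun h => hT0 (h ▸ ht)⟩
  · rcases hx with rfl | rfl
    · exact ⟨h2C, two_nsmul g ▸ not_add_eq hgC hgC hg0 hg0⟩
    · exact ⟨C.nsmul_mem hgC 3, succ_nsmul' g 2 ▸ not_add_eq hgC h2C hg0 h20⟩

theorem coe_closure_insert_diff_eq_closure_eraseGenerators {g : M} {T : Set M}
    (hg : (closure (insert g T)).IsMinimalGenerator g) (hT0 : 0 ∉ T) (hTg : g ∉ T) :
    (closure (insert g T) : Set M) \ {g} = closure (eraseGenerators g T) := by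
  apply Set.Subset.antisymm
  · rintro x ⟨hx, hxg⟩
    exact (closure_insert_subset_insert_closure_eraseGenerators g T hx).resolve_left hxg
  · have hE := eraseGenerators_subset hg ((Set.subset_insert g T).trans subset_closure) hT0 hTg
    exact closure_le (S := eraseMinimalGenerator hg).mpr hE

end AddSubmonoid

open AddSubmonoid in
/-- If `C = ⟨g_0, g_1, …, g_n⟩ ⊆ ℕ^d` with all `g_j ≠ 0` and `g_j ≠ g_0` for `j ≠ 0`,
and `g_0` is a minimal generator of `C` (cannot be written as a sum of two nonzero
elements of `C`), then
`C \ {g_0} = ⟨{g_j : j ≠ 0} ∪ {g_0 + g_j : j ≠ 0} ∪ {2g_0, 3g_0}⟩`. -/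
theorem stmt2 {d n : ℕ} (g : Fin (n + 1) → (Fin d → ℕ))
    (hne : ∀ j, g j ≠ 0) (hneq : ∀ j : Fin (n + 1), j ≠ 0 → g j ≠ g 0)
    (C : AddSubmonoid (Fin d → ℕ)) (hC : C = AddSubmonoid.closure (Set.range g))
    (hmin : ¬ ∃ a b : Fin d → ℕ, a ∈ C ∧ a ≠ 0 ∧ b ∈ C ∧ b ≠ 0 ∧ g 0 = a + b) :
    (C : Set (Fin d → ℕ)) \ {g 0} =
      (AddSubmonoid.closure
        ((g '' {j | j ≠ 0}) ∪ ((fun j => g 0 + g j) '' {j | j ≠ 0}) ∪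
          {2 • g 0, 3 • g 0}) : Set (Fin d → ℕ)) := by
  set T := g '' {j | j ≠ 0}
  have hrange : Set.range g = insert (g 0) T := by
    ext x
    simp only [Set.mem_range, Set.mem_insert_iff, T, Set.mem_image, Set.mem_ofPred_eq]
    constructor
    · rintro ⟨j, rfl⟩
      by_cases hj : j = 0
      · exact Or.inl (hj ▸ rfl)
      · exact Or.inr ⟨j, hj, rfl⟩
    · rintro (rfl | ⟨j, -, rfl⟩) <;> exact ⟨_, rfl⟩
  have hg : C.IsMinimalGenerator (g 0) := by
    refine ⟨hC ▸ subset_closure ⟨0, rfl⟩, hne 0, fun a ha b hb hab => ?_⟩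
    by_contra! h
    exact hmin ⟨a, b, ha, h.1, hb, h.2, hab.symm⟩
  rw [hC, hrange] at hg ⊢
  rw [coe_closure_insert_diff_eq_closure_eraseGenerators hg (fun ⟨j, _, hj⟩ => hne j hj)
    (fun ⟨j, hj, hgj⟩ => hneq j hj hgj), eraseGenerators, Set.image_image]
end

section
/- Let C ⊆ ℕ^d be the additive submonoid generated by g_1, …, g_n with g_i ≠ 0 for every i, let f_C : ℕ^n → C be the monoid homomorphism sending (a_1, …, a_n) to Σ_{i=1}^n a_i g_i, and let S be a submonoid of C. Then C \ S is a finite set if and only if ℕ^n \ f_C^{-1}(S) is a finite set. -/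
/-!
The map `f_C` has finite fibres: a nonzero generator `g i` has a positive coordinate `j`, so
`f_C a = c` forces `a i ≤ c j`. A map with finite fibres and image `C` pulls the complement of
`S` in `C` back onto the complement of `f_C⁻¹(S)`, and finiteness passes both ways.
-/

theorem Set.finite_diff_iff_finite_compl_preimage {α β : Type*} {f : α → β} {C S : Set β}
    (hf : ∀ b, (f ⁻¹' {b}).Finite) (hC : Set.range f = C) :
    (C \ S).Finite ↔ (f ⁻¹' S)ᶜ.Finite := by
  have himage : f '' (f ⁻¹' S)ᶜ = C \ S := by
    rw [← Set.preimage_compl, Set.image_preimage_eq_range_inter, hC, Set.sdiff_eq]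
  refine ⟨fun h => ?_, fun h => himage ▸ h.image f⟩
  rw [← himage] at h
  exact (h.preimage' fun b _ => hf b).subset (Set.subset_preimage_image f _)

theorem finite_setOf_sum_nsmul_eq {ι κ : Type*} [Fintype ι] {g : ι → κ → ℕ}
    (hg : ∀ i, g i ≠ 0) (c : κ → ℕ) :
    {a : ι → ℕ | ∑ i, a i • g i = c}.Finite := by
  choose j hj using fun i => Function.ne_iff.mp (hg i)
  refine (Set.Finite.pi fun i => Set.finite_Iic (c (j i))).subset fun a ha i _ => ?_
  have hterm : a i • g i ≤ c :=
    ha ▸ Finset.single_le_sum (f := fun k => a k • g k) (fun _ _ => zero_le)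
      (Finset.mem_univ i)
  calc a i ≤ a i * g i (j i) := Nat.le_mul_of_pos_right _ (Nat.pos_of_ne_zero (hj i))
    _ ≤ c (j i) := hterm (j i)

theorem stmt4_general {d n : ℕ} (g : Fin n → (Fin d → ℕ)) (hg : ∀ i, g i ≠ 0)
    (C S : AddSubmonoid (Fin d → ℕ))
    (hC : C = AddSubmonoid.closure (Set.range g)) :
    ((C : Set (Fin d → ℕ)) \ (S : Set (Fin d → ℕ))).Finite ↔
      ({a : Fin n → ℕ | (∑ i, a i • g i) ∈ S}ᶜ).Finite := by
  have hrange : Set.range (fun a : Fin n → ℕ => ∑ i, a i • g i) = C := by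
    ext x
    rw [hC, SetLike.mem_coe, AddSubmonoid.mem_closure_range_iff_of_fintype]
    simp only [Set.mem_range, eq_comm]
  exact Set.finite_diff_iff_finite_compl_preimage (finite_setOf_sum_nsmul_eq hg) hrange

/-- Let `C = ⟨g_1, …, g_n⟩ ⊆ ℕ^d` with all `g_i ≠ 0`, let `f_C : ℕ^n → C` be
`a ↦ Σ_i a_i g_i`, and let `S ⊆ C` be a submonoid. Then `C \ S` is finite iff
`ℕ^n \ f_C⁻¹(S)` is finite. -/
theorem stmt4 {d n : ℕ} (g : Fin n → (Fin d → ℕ)) (hg : ∀ i, g i ≠ 0)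
    (C S : AddSubmonoid (Fin d → ℕ))
    (hC : C = AddSubmonoid.closure (Set.range g)) (hSC : S ≤ C) :
    ((C : Set (Fin d → ℕ)) \ (S : Set (Fin d → ℕ))).Finite ↔
      ({a : Fin n → ℕ | (∑ i, a i • g i) ∈ S}ᶜ).Finite :=
  stmt4_general g hg C S hC
end

section
/- Let A ⊆ ℕ^n and let e_1, …, e_n denote the standard basis vectors of ℕ^n. Then the submonoid ⟨A⟩ has finite complement in ℕ^n if and only if both of the following hold: (1) for every i ∈ {1,…,n} there exist s_i ≥ 1 and positive integers a_1^{(i)}, …, a_{s_i}^{(i)} with a_j^{(i)} e_i ∈ A for all j and gcd(a_1^{(i)}, …, a_{s_i}^{(i)}) = 1; (2) for all i, j ∈ {1,…,n} with i ≠ j there exists n_i^{(j)} ∈ ℕ such that e_i + n_i^{(j)} e_j ∈ A. -/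
/-!
Since `ℕ^n` is canonically ordered, an element of `⟨A⟩` is a sum of elements of `A` lying below
it. Below a multiple of `e_i` there are only multiples of `e_i`, so the multiples of `e_i` in `⟨A⟩`
form the numerical semigroup generated by `{a | a e_i ∈ A}`, which is cofinite exactly when these
`a` have gcd `1`; below `e_i + k e_j` only the elements `e_i + m e_j` have a nonzero `i`-th
coordinate. Conversely, once all large multiples `k e_i` lie in `⟨A⟩`, a point with a large `i`-th
coordinate is reached by covering each small coordinate `x_j` by `x_j (e_j + m e_i)` and paying
the bounded total cost from the `i`-th coordinate.
-/

namespace Nat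

theorem eq_one_of_dvd_of_dvd_add_one {d k : ℕ} (hk : d ∣ k) (hk1 : d ∣ k + 1) : d = 1 :=
  Nat.dvd_one.mp ((Nat.dvd_add_right hk).mp hk1)

theorem finite_compl_closure_iff_setGcd_eq_one (D : Set ℕ) :
    ((AddSubmonoid.closure D : Set ℕ)ᶜ).Finite ↔ setGcd D = 1 := by
  constructor
  · intro h
    obtain ⟨b, hb⟩ := h.bddAbove
    have hmem : ∀ k, b < k → setGcd D ∣ k := fun k hk =>
      setGcd_dvd_of_mem_closure (not_not.mp fun hk' => absurd (hb hk') (not_le.mpr hk))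
    exact eq_one_of_dvd_of_dvd_add_one (hmem (b + 1) (by omega)) (hmem (b + 2) (by omega))
  · intro h
    obtain ⟨c, hc⟩ := exists_mem_closure_of_ge D
    exact (Set.finite_Iio c).subset fun k hk =>
      not_le.mp fun hck => hk (hc k hck (h ▸ one_dvd k))

theorem exists_finset_subset_gcd_eq_one {D : Set ℕ} (h : setGcd D = 1) :
    ∃ F : Finset ℕ, ↑F ⊆ D ∧ F.gcd id = 1 := by
  obtain ⟨t, n, htD, ht⟩ := exists_mem_span_nat_finset_of_ge D
  have hdvd : ∀ m ≥ n, t.gcd id ∣ m := fun m hm =>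
    Ideal.mem_span_singleton.mp <| Ideal.span_le.mpr
      (fun x hx => Ideal.mem_span_singleton.mpr (Finset.gcd_dvd hx)) (ht m hm (h ▸ one_dvd m))
  exact ⟨t, htD, eq_one_of_dvd_of_dvd_add_one (hdvd n le_rfl) (hdvd (n + 1) (by omega))⟩

theorem setGcd_eq_one_iff_exists_fin_pos_gcd_eq_one (D : Set ℕ) :
    setGcd D = 1 ↔
      ∃ s : ℕ, 0 < s ∧ ∃ a : Fin s → ℕ, (∀ j, 0 < a j ∧ a j ∈ D) ∧ Finset.univ.gcd a = 1 := by
  constructor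
  · intro h
    obtain ⟨F, hFD, hF⟩ := exists_finset_subset_gcd_eq_one h
    set G := F.filter (· ≠ 0)
    have hG : G.gcd id = 1 := by rw [← hF, Finset.gcd_eq_gcd_filter_ne_zero (s := F)]; rfl
    have hGpos : 0 < G.card := Finset.card_pos.mpr <| Finset.nonempty_iff_ne_empty.mpr
      fun hG0 => by simp [hG0] at hG
    refine ⟨G.card, hGpos, G.orderEmbOfFin rfl, fun j => ?_, ?_⟩
    · have hj := (Finset.mem_filter.mp (G.orderEmbOfFin_mem rfl j))
      exact ⟨Nat.pos_of_ne_zero hj.2, hFD hj.1⟩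
    · rw [← hG, ← congrArg (Finset.gcd · id) (Finset.image_orderEmbOfFin_univ G rfl),
        Finset.gcd_image]
      rfl
  · rintro ⟨s, -, a, ha, hgcd⟩
    exact Nat.dvd_one.mp (hgcd ▸ Finset.dvd_gcd fun j _ => setGcd_dvd_of_mem (ha j).2)

end Nat

namespace AddSubmonoid

theorem mem_closure_inter_Iic {M : Type*} [AddCommMonoid M] [PartialOrder M]
    [CanonicallyOrderedAdd M] {A : Set M} {x : M} (hx : x ∈ closure A) :
    x ∈ closure (A ∩ Set.Iic x) := by
  obtain ⟨s, hsA, rfl⟩ := exists_multiset_of_mem_closure hx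
  exact multiset_sum_mem _ _ fun y hy => subset_closure ⟨hsA y hy, Multiset.le_sum_of_mem hy⟩

theorem exists_mem_apply_ne_zero_of_mem_closure {M N : Type*} [AddMonoid M] [AddMonoid N]
    {B : Set M} {x : M} (f : M →+ N) (hx : x ∈ closure B) (hfx : f x ≠ 0) :
    ∃ y ∈ B, f y ≠ 0 := by
  by_contra! h
  exact hfx (closure_le.mpr (fun y hy => h y hy) hx : x ∈ AddMonoidHom.mker f)

end AddSubmonoid

namespace Pi

variable {ι : Type*} [DecidableEq ι]

theorem nsmul_single_one (i : ι) (k : ℕ) : k • Pi.single i (1 : ℕ) = (Pi.single i k : ι → ℕ) := by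
  rw [← single_smul', smul_eq_mul, mul_one]

theorem eq_single_of_le_single {i : ι} {k : ℕ} {y : ι → ℕ} (hy : y ≤ Pi.single i k) :
    y = Pi.single i (y i) := by
  funext l
  by_cases hl : l = i
  · subst hl; simp
  · simpa [hl] using hy l

theorem eq_single_one_add_single_of_le {i j : ι} (hij : i ≠ j) {k : ℕ} {y : ι → ℕ}
    (hy : y ≤ Pi.single i 1 + Pi.single j k) (hyi : y i ≠ 0) :
    y = Pi.single i 1 + Pi.single j (y j) := by
  funext l
  have hyl := hy l
  by_cases hli : l = i
  · subst hli; simp [hij] at hyl ⊢; omega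
  · by_cases hlj : l = j
    · subst hlj; simp [hli]
    · simp_all

theorem single_mem_closure_iff {A : Set (ι → ℕ)} {i : ι} {k : ℕ} :
    Pi.single i k ∈ AddSubmonoid.closure A ↔ k ∈ AddSubmonoid.closure (Pi.single i ⁻¹' A) := by
  have hmap : (AddSubmonoid.closure (Pi.single i ⁻¹' A)).map (AddMonoidHom.single (fun _ => ℕ) i) =
      AddSubmonoid.closure (Pi.single i '' (Pi.single i ⁻¹' A)) := AddMonoidHom.map_mclosure _ _
  rw [← AddSubmonoid.mem_map_iff_mem (f := AddMonoidHom.single (fun _ => ℕ) i)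
    (Pi.single_injective (M := fun _ => ℕ) i), hmap]
  constructor
  · intro h
    refine AddSubmonoid.closure_mono ?_ (AddSubmonoid.mem_closure_inter_Iic h)
    rintro y ⟨hyA, hyk⟩
    rw [eq_single_of_le_single hyk] at hyA ⊢
    exact Set.mem_image_of_mem _ hyA
  · exact fun h => AddSubmonoid.closure_mono (Set.image_preimage_subset _ _) h

theorem finite_compl_closure_preimage_single {A : Set (ι → ℕ)}
    (h : ((AddSubmonoid.closure A : Set (ι → ℕ))ᶜ).Finite) (i : ι) :
    ((AddSubmonoid.closure (Pi.single i ⁻¹' A) : Set ℕ)ᶜ).Finite :=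
  (h.preimage (Pi.single_injective (M := fun _ => ℕ) i).injOn).subset
    fun _ hk hki => hk (single_mem_closure_iff.mp hki)

theorem exists_single_one_add_single_mem_of_finite_compl {A : Set (ι → ℕ)}
    (h : ((AddSubmonoid.closure A : Set (ι → ℕ))ᶜ).Finite) {i j : ι} (hij : i ≠ j) :
    ∃ m, Pi.single i 1 + Pi.single j m ∈ A := by
  have hinj : Function.Injective fun k : ℕ => (Pi.single i 1 + Pi.single j k : ι → ℕ) :=
    fun a b hab => by simpa [hij.symm] using congrFun hab j
  obtain ⟨k, hk⟩ := (h.preimage hinj.injOn).exists_notMem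
  obtain ⟨y, ⟨hyA, hyx⟩, hyi⟩ := AddSubmonoid.exists_mem_apply_ne_zero_of_mem_closure
    (Pi.evalAddMonoidHom _ i) (AddSubmonoid.mem_closure_inter_Iic (not_not.mp hk))
    (by simp [hij.symm])
  exact ⟨y j, eq_single_one_add_single_of_le hij hyx hyi ▸ hyA⟩

theorem exists_forall_single_mem_closure [Finite ι] {A : Set (ι → ℕ)}
    (h : ∀ i, ((AddSubmonoid.closure (Pi.single i ⁻¹' A) : Set ℕ)ᶜ).Finite) :
    ∃ c, ∀ i k, c ≤ k → Pi.single i k ∈ AddSubmonoid.closure A := by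
  obtain ⟨b, hb⟩ := (Set.finite_iUnion h).bddAbove
  refine ⟨b + 1, fun i k hk => single_mem_closure_iff.mpr (not_not.mp fun hki => ?_)⟩
  have := hb (Set.mem_iUnion.mpr ⟨i, hki⟩)
  omega

theorem exists_le_single_add_single_mem {S : AddSubmonoid (ι → ℕ)} {i j : ι} {c m : ℕ}
    (hc : ∀ k, c ≤ k → Pi.single j k ∈ S) (hm : Pi.single j 1 + Pi.single i m ∈ S) (t : ℕ) :
    ∃ r ≤ c * m, Pi.single j t + Pi.single i r ∈ S := by
  rcases lt_or_ge t c with htc | hct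
  · refine ⟨t * m, Nat.mul_le_mul_right _ htc.le, ?_⟩
    simpa [smul_add, nsmul_single_one, ← single_smul'] using S.nsmul_mem hm t
  · exact ⟨0, Nat.zero_le _, by simpa using hc t hct⟩

theorem mem_of_add_card_mul_le_apply [Fintype ι] {S : AddSubmonoid (ι → ℕ)} {i : ι} {c R : ℕ}
    (hc : ∀ k, c ≤ k → Pi.single i k ∈ S)
    (hcover : ∀ j, j ≠ i → ∀ t, ∃ r ≤ R, Pi.single j t + Pi.single i r ∈ S)
    {x : ι → ℕ} (hx : c + Fintype.card ι * R ≤ x i) : x ∈ S := by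
  choose! r hrR hrS using hcover
  set T := Finset.univ.erase i
  set s := ∑ j ∈ T, r j (x j)
  have hs : s ≤ Fintype.card ι * R := by
    calc s ≤ T.card * R :=
          Finset.sum_le_card_nsmul _ _ _ fun j hj => hrR j (Finset.ne_of_mem_erase hj) _
      _ ≤ Fintype.card ι * R := Nat.mul_le_mul_right _ T.card_le_univ
  have hx_eq :
      x = Pi.single i (x i - s) + ∑ j ∈ T, (Pi.single j (x j) + Pi.single i (r j (x j))) := by
    have hT : ∑ j ∈ T, Pi.single j (x j) + Pi.single i (x i) = x := by
      rw [Finset.sum_erase_add _ _ (Finset.mem_univ i), Finset.univ_sum_single]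
    have hsingle : ∑ j ∈ T, Pi.single i (r j (x j)) = (Pi.single i s : ι → ℕ) :=
      (map_sum (AddMonoidHom.single (fun _ => ℕ) i) _ T).symm
    calc x = ∑ j ∈ T, Pi.single j (x j) + Pi.single i (x i - s + s) := by
          rw [Nat.sub_add_cancel (by omega), hT]
      _ = _ := by rw [Finset.sum_add_distrib, hsingle, Pi.single_add]; abel
  rw [hx_eq]
  exact add_mem (hc _ (by omega)) (sum_mem fun j hj => hrS j (Finset.ne_of_mem_erase hj) (x j))

theorem finite_compl_of_forall_single_mem [Fintype ι] {S : AddSubmonoid (ι → ℕ)} {c : ℕ}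
    (hc : ∀ i k, c ≤ k → Pi.single i k ∈ S)
    (hm : ∀ i j, i ≠ j → ∃ m, Pi.single i 1 + Pi.single j m ∈ S) :
    ((S : Set (ι → ℕ))ᶜ).Finite := by
  choose! m hm using hm
  set M := Finset.univ.sup fun p : ι × ι => m p.1 p.2
  have hmM : ∀ i j, m i j ≤ M := fun i j =>
    Finset.le_sup (f := fun p : ι × ι => m p.1 p.2) (Finset.mem_univ (i, j))
  refine (Set.Finite.pi fun _ : ι => Set.finite_Iio (c + Fintype.card ι * (c * M))).subset
    fun x hx i _ => not_le.mp fun hxi => hx (mem_of_add_card_mul_le_apply (hc i) (fun j hji t => ?_) hxi)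
  obtain ⟨r, hr, hrS⟩ := exists_le_single_add_single_mem (hc j) (hm j i hji) t
  exact ⟨r, hr.trans (Nat.mul_le_mul_left _ (hmM j i)), hrS⟩

end Pi

/-- Characterization of submonoids `⟨A⟩ ⊆ ℕ^n` with finite complement:
(1) for every `i` there are finitely many positive multiples `a_j e_i ∈ A` with
`gcd` of the `a_j` equal to `1`; (2) for all `i ≠ j` there is `m ∈ ℕ` with
`e_i + m e_j ∈ A`. -/
theorem stmt6 {n : ℕ} (A : Set (Fin n → ℕ)) :
    ((AddSubmonoid.closure A : Set (Fin n → ℕ))ᶜ).Finite ↔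
      ((∀ i : Fin n, ∃ s : ℕ, 0 < s ∧ ∃ a : Fin s → ℕ,
          (∀ j, 0 < a j ∧ a j • Pi.single i 1 ∈ A) ∧ Finset.univ.gcd a = 1) ∧
       (∀ i j : Fin n, i ≠ j →
          ∃ m : ℕ, Pi.single i 1 + m • Pi.single j 1 ∈ A)) := by
  have hgcd (i : Fin n) := (Nat.finite_compl_closure_iff_setGcd_eq_one
    (Pi.single (M := fun _ => ℕ) i ⁻¹' A)).trans
    (Nat.setGcd_eq_one_iff_exists_fin_pos_gcd_eq_one _)
  simp only [Pi.nsmul_single_one]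
  constructor
  · intro h
    exact ⟨fun i => (hgcd i).mp (Pi.finite_compl_closure_preimage_single h i),
      fun i j hij => Pi.exists_single_one_add_single_mem_of_finite_compl h hij⟩
  · rintro ⟨h1, h2⟩
    obtain ⟨c, hc⟩ := Pi.exists_forall_single_mem_closure fun i => (hgcd i).mpr (h1 i)
    exact Pi.finite_compl_of_forall_single_mem hc fun i j hij =>
      (h2 i j hij).imp fun _ hm => AddSubmonoid.subset_closure hm
end

section
/- Let C ⊆ ℕ^d be the additive submonoid generated by g_1, …, g_n with g_i ≠ 0 for every i, and let S ⊆ C be a submonoid. Then C \ S is finite if and only if both of the following hold: (1) for every i ∈ {1,…,n}, the set S_i = {λ ∈ ℕ : λ·g_i ∈ S} is a numerical semigroup (i.e., a submonoid of ℕ with finite complement in ℕ); (2) for all i, j ∈ {1,…,n} with i ≠ j there exists n_i^{(j)} ∈ ℕ such that g_i + n_i^{(j)}·g_j ∈ S. -/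
/-!
Write elements of `C` as `∑ a_j • g_j`. If `C \ S` is finite, then along each injective ray
`a + m • g_j` inside `C` almost every point lies in `S`, which gives both conditions.
Conversely, let every `l • g_j` with `l ≥ N_j` lie in `S` and `g_j + m_j • g_i ∈ S`.
If one coefficient `a_i` is large, each remaining term `a_j • g_j` can be moved into `S`
either directly (when `a_j ≥ N_j`) or by borrowing `a_j m_j ≤ N_j m_j` copies of `g_i`;
what is left of `a_i • g_i` still lies in `S`. Hence `C \ S` only contains elements with
bounded coefficients, of which there are finitely many.
-/

open Finset

namespace AddSubmonoid

variable {M ι : Type*} [AddCommMonoid M]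

lemma finite_setOf_add_nsmul_notMem [Preorder M] [AddLeftStrictMono M] {C S : AddSubmonoid M}
    (hCS : ((C : Set M) \ S).Finite) {a v : M} (ha : a ∈ C) (hv : v ∈ C) (hv0 : 0 < v) :
    {m : ℕ | a + m • v ∉ S}.Finite :=
  (hCS.preimage ((nsmul_left_strictMono hv0).const_add a).injective.injOn).subset
    fun m hm => ⟨C.add_mem ha (C.nsmul_mem hv m), hm⟩

lemma exists_le_nsmul_add_nsmul_mem {S : AddSubmonoid M} {u v : M} {N m : ℕ}
    (hN : ∀ l, N ≤ l → l • u ∈ S) (hm : u + m • v ∈ S) (a : ℕ) :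
    ∃ c ≤ N * m, a • u + c • v ∈ S := by
  by_cases ha : N ≤ a
  · exact ⟨0, Nat.zero_le _, by simpa using hN a ha⟩
  · refine ⟨a * m, by gcongr; omega, ?_⟩
    rw [mul_smul, ← smul_add]
    exact S.nsmul_mem hm a

variable [Fintype ι] [DecidableEq ι] {g : ι → M} {S : AddSubmonoid M}

lemma sum_nsmul_mem_of_le {N : ι → ℕ} {i : ι} {m : ι → ℕ}
    (hN : ∀ j l, N j ≤ l → l • g j ∈ S) (hm : ∀ j, j ≠ i → g j + m j • g i ∈ S)
    {a : ι → ℕ} (hai : N i + ∑ j, N j * m j ≤ a i) :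
    ∑ j, a j • g j ∈ S := by
  have hc : ∀ j ∈ univ.erase i, ∃ c ≤ N j * m j, a j • g j + c • g i ∈ S := fun j hj =>
    exists_le_nsmul_add_nsmul_mem (hN j) (hm j (ne_of_mem_erase hj)) (a j)
  choose! c hcle hcS using hc
  set E := ∑ j ∈ univ.erase i, c j with hEdef
  have hE : E ≤ ∑ j, N j * m j :=
    (sum_le_sum hcle).trans (sum_le_sum_of_subset (subset_univ _))
  have hsplit : ∑ j, a j • g j =
      (a i - E) • g i + ∑ j ∈ univ.erase i, (a j • g j + c j • g i) := by
    rw [sum_add_distrib, ← sum_smul, ← hEdef, ← add_sum_erase _ _ (mem_univ i)]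
    nth_rw 1 [← Nat.sub_add_cancel (show E ≤ a i by omega)]
    rw [add_smul]
    abel
  rw [hsplit]
  exact S.add_mem (hN i _ (by omega)) (S.sum_mem hcS)

lemma finite_closure_range_diff_of_le (K : ι → ℕ)
    (hK : ∀ a : ι → ℕ, ∀ i, K i ≤ a i → ∑ j, a j • g j ∈ S) :
    ((closure (Set.range g) : Set M) \ S).Finite := by
  refine ((Set.finite_Iic K).image fun a => ∑ j, a j • g j).subset ?_
  rintro x ⟨hxC, hxS⟩
  obtain ⟨a, rfl⟩ := mem_closure_range_iff_of_fintype.1 hxC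
  exact ⟨a, fun j => not_lt.1 fun hj => hxS (hK a j hj.le), rfl⟩

end AddSubmonoid

theorem stmt7_general {d n : ℕ} (g : Fin n → (Fin d → ℕ)) (hg : ∀ i, g i ≠ 0)
    (C S : AddSubmonoid (Fin d → ℕ))
    (hC : C = AddSubmonoid.closure (Set.range g)) :
    ((C : Set (Fin d → ℕ)) \ (S : Set (Fin d → ℕ))).Finite ↔
      ((∀ i : Fin n, ∃ T : AddSubmonoid ℕ,
          (T : Set ℕ) = {l : ℕ | l • g i ∈ S} ∧ ((T : Set ℕ)ᶜ).Finite) ∧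
       (∀ i j : Fin n, i ≠ j → ∃ m : ℕ, g i + m • g j ∈ S)) := by
  subst hC
  have hgC i : g i ∈ AddSubmonoid.closure (Set.range g) :=
    AddSubmonoid.subset_closure (Set.mem_range_self i)
  constructor
  · intro hfin
    have ray {a} (ha : a ∈ AddSubmonoid.closure (Set.range g)) j :=
      AddSubmonoid.finite_setOf_add_nsmul_notMem hfin ha (hgC j) (pos_iff_ne_zero.2 (hg j))
    refine ⟨fun i => ⟨S.comap (multiplesHom _ (g i)), rfl, ?_⟩, fun i j _ => ?_⟩
    · exact (by simpa only [zero_add] using ray (AddSubmonoid.zero_mem _) i :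
        {l : ℕ | l • g i ∉ S}.Finite)
    · simpa only [Set.mem_ofPred_eq, not_not] using (ray (hgC i) j).exists_notMem
  · rintro ⟨hsemi, hpair⟩
    have hN i : ∃ N : ℕ, ∀ l, N ≤ l → l • g i ∈ S := by
      obtain ⟨T, hT, hTfin⟩ := hsemi i
      rw [hT] at hTfin
      exact Filter.eventually_atTop.1 (Nat.cofinite_eq_atTop ▸ hTfin)
    choose N hN using hN
    choose! m hm using hpair
    exact AddSubmonoid.finite_closure_range_diff_of_le (fun i => N i + ∑ j, N j * m j i)
      fun a i hai => AddSubmonoid.sum_nsmul_mem_of_le hN (fun j hj => hm j i hj) hai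

/-- Let `C = ⟨g_1, …, g_n⟩ ⊆ ℕ^d` with all `g_i ≠ 0` and `S ⊆ C` a submonoid.
Then `C \ S` is finite iff (1) each `S_i = {λ : λ·g_i ∈ S}` is a numerical
semigroup (a submonoid of `ℕ` with finite complement), and (2) for all `i ≠ j`
there is `m ∈ ℕ` with `g_i + m·g_j ∈ S`. -/
theorem stmt7 {d n : ℕ} (g : Fin n → (Fin d → ℕ)) (hg : ∀ i, g i ≠ 0)
    (C S : AddSubmonoid (Fin d → ℕ))
    (hC : C = AddSubmonoid.closure (Set.range g)) (hSC : S ≤ C) :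
    ((C : Set (Fin d → ℕ)) \ (S : Set (Fin d → ℕ))).Finite ↔
      ((∀ i : Fin n, ∃ T : AddSubmonoid ℕ,
          (T : Set ℕ) = {l : ℕ | l • g i ∈ S} ∧ ((T : Set ℕ)ᶜ).Finite) ∧
       (∀ i j : Fin n, i ≠ j → ∃ m : ℕ, g i + m • g j ∈ S)) :=
  stmt7_general g hg C S hC
end

section
/- Let C ⊆ ℕ^d be the additive submonoid generated by g_1, …, g_r, g_{r+1}, …, g_{r+m}, all nonzero, such that cone({g_1,…,g_{r+m}}) = cone({g_1,…,g_r}). Fix i ∈ {1,…,r} such that g_i ∉ cone({g_1,…,g_r} \ {g_i}) and such that the greatest common divisor of the coordinates of g_i equals 1. Let S ⊆ C be a submonoid and let A = (S \ {0}) \ ((S \ {0}) + (S \ {0})) be the minimal generating set of S. Let S_i = {λ ∈ ℕ : λ·g_i ∈ S}. Then for every minimal generator λ of the monoid S_i, i.e., every λ ∈ (S_i \ {0}) \ ((S_i \ {0}) + (S_i \ {0})), one has λ·g_i ∈ A. -/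
/-! If `l • g i = x + y` with `x, y ∈ S \ {0}`, write `x` and `y` over `ℚ` as nonnegative
combinations of `g_1, …, g_r`. Since `g_i` is extreme, the ray through `g_i` is a face of this
cone, so all coefficients away from `i` vanish: `x` and `y` are rational multiples of `g_i`, hence
natural multiples because the coordinates of `g_i` are coprime. Then `l` splits in `S_i \ {0}`,
contradicting its minimality. -/

open Pointwise

section Cone

variable (𝕜 : Type*) {ι E : Type*} [Fintype ι] [Field 𝕜] [LinearOrder 𝕜] [IsStrictOrderedRing 𝕜]
  [AddCommGroup E] [PartialOrder E] [IsOrderedAddMonoid E] [Module 𝕜 E] [PosSMulMono 𝕜 E]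

/-- The cone spanned by the `w t` with `t ∈ T`, written with coefficients on all of `ι` that vanish
off `T`. -/
def coneOn (w : ι → E) (T : Set ι) : AddSubmonoid E where
  carrier := {v | ∃ q : ι → 𝕜, (∀ t, 0 ≤ q t) ∧ (∀ t ∉ T, q t = 0) ∧ v = ∑ t, q t • w t}
  zero_mem' := ⟨0, fun _ => le_rfl, fun _ _ => rfl, by simp⟩
  add_mem' := by
    rintro _ _ ⟨q, hq0, hqT, rfl⟩ ⟨p, hp0, hpT, rfl⟩
    exact ⟨q + p, fun t => add_nonneg (hq0 t) (hp0 t), fun t ht => by simp [hqT t ht, hpT t ht],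
      by simp [add_smul, Finset.sum_add_distrib]⟩

variable {𝕜} {w : ι → E} {T : Set ι} {i : ι}

theorem coneOn_coeff_eq_zero (hw0 : ∀ t, 0 ≤ w t) (hw : ∀ t, w t ≠ 0)
    (hext : w i ∉ coneOn 𝕜 w (T \ {i})) {P : ι → 𝕜} (hP0 : ∀ t, 0 ≤ P t)
    (hPT : ∀ t ∉ T, P t = 0) {c : 𝕜} (h : c • w i = ∑ t, P t • w t) {t : ι} (hti : t ≠ i) :
    P t = 0 := by
  classical
  -- `(c - P i) • w i` is a nonnegative combination of the other `w t`: it cannot be negative since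
  -- `0 < w i`, nor positive since `w i` is extreme, so it is zero and so are the other terms.
  have hsplit : (c - P i) • w i = ∑ t ∈ Finset.univ.erase i, P t • w t := by
    rw [sub_smul, h, ← Finset.add_sum_erase _ _ (Finset.mem_univ i), add_sub_cancel_left]
  have hrest : 0 ≤ ∑ t ∈ Finset.univ.erase i, P t • w t :=
    Finset.sum_nonneg fun t _ => smul_nonneg (hP0 t) (hw0 t)
  have hc : c - P i = 0 := by
    rcases lt_trichotomy (c - P i) 0 with hneg | hzero | hpos
    · have hnonpos : (c - P i) • w i ≤ 0 := by
        rw [← neg_nonneg, ← neg_smul]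
        exact smul_nonneg (neg_nonneg.mpr hneg.le) (hw0 i)
      have := le_antisymm hnonpos (hsplit ▸ hrest)
      exact absurd ((smul_eq_zero.mp this).resolve_left hneg.ne) (hw i)
    · exact hzero
    · refine absurd ⟨Function.update (fun t => (c - P i)⁻¹ * P t) i 0, fun t => ?_, fun t ht => ?_,
        ?_⟩ hext
      · rcases eq_or_ne t i with rfl | hti
        · simp
        · simpa [hti] using mul_nonneg (inv_nonneg.mpr hpos.le) (hP0 t)
      · rcases eq_or_ne t i with rfl | hti
        · simp
        · simp [hti, hPT t fun htT => ht ⟨htT, hti⟩]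
      · rw [← Finset.add_sum_erase _ _ (Finset.mem_univ i), Function.update_self, zero_smul,
          zero_add, Finset.sum_congr rfl fun t ht => by
            rw [Function.update_of_ne (Finset.ne_of_mem_erase ht), mul_smul],
          ← Finset.smul_sum, ← hsplit, smul_smul, inv_mul_cancel₀ hpos.ne', one_smul]
  rw [hc, zero_smul, eq_comm,
    Finset.sum_eq_zero_iff_of_nonneg fun t _ => smul_nonneg (hP0 t) (hw0 t)] at hsplit
  exact (smul_eq_zero.mp (hsplit t (Finset.mem_erase.mpr ⟨hti, Finset.mem_univ t⟩))).resolve_right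
    (hw t)

theorem exists_eq_smul_of_add_eq_smul (hw0 : ∀ t, 0 ≤ w t) (hw : ∀ t, w t ≠ 0)
    (hext : w i ∉ coneOn 𝕜 w (T \ {i})) {u v : E} (hu : u ∈ coneOn 𝕜 w T)
    (hv : v ∈ coneOn 𝕜 w T) {c : 𝕜} (huv : u + v = c • w i) : ∃ a : 𝕜, u = a • w i := by
  obtain ⟨q, hq0, hqT, rfl⟩ := hu
  obtain ⟨p, hp0, hpT, rfl⟩ := hv
  have hzero (t : ι) (hti : t ≠ i) : q t + p t = 0 :=
    coneOn_coeff_eq_zero hw0 hw hext (P := q + p) (c := c) (fun t => add_nonneg (hq0 t) (hp0 t))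
      (fun t ht => by simp [hqT t ht, hpT t ht])
      (by simp only [Pi.add_apply, add_smul, Finset.sum_add_distrib, huv]) hti
  refine ⟨q i, Finset.sum_eq_single i (fun t _ hti => ?_) (by simp)⟩
  rw [((add_eq_zero_iff_of_nonneg (hq0 t) (hp0 t)).mp (hzero t hti)).1, zero_smul]

end Cone

theorem exists_nsmul_eq_of_natCast_eq_smul {κ : Type*} [Fintype κ] {v w : κ → ℕ}
    (hw : Finset.univ.gcd w = 1) {a : ℚ} (h : ∀ k, (v k : ℚ) = a * w k) : ∃ m : ℕ, v = m • w := by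
  have hkey (k : κ) : v k * a.den = a.num.natAbs * w k := by
    have hk := h k
    rw [← Rat.num_div_den a] at hk
    field_simp at hk
    have := congrArg Int.natAbs (show (v k : ℤ) * a.den = a.num * w k by exact_mod_cast hk)
    simpa [Int.natAbs_mul] using this
  have hden : a.den = 1 := Nat.eq_one_of_dvd_one <| hw ▸ Finset.dvd_gcd fun k _ =>
    a.reduced.symm.dvd_of_dvd_mul_left ⟨v k, by rw [← hkey, mul_comm]⟩
  exact ⟨a.num.natAbs, funext fun k => by simpa [hden] using hkey k⟩

theorem stmt9_general {d n : ℕ} (r : ℕ) (g : Fin n → (Fin d → ℕ))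
    (hg : ∀ j, g j ≠ 0)
    (hcone : ∀ j : Fin n, ∃ q : Fin n → ℚ, (∀ t, 0 ≤ q t) ∧
        (∀ t : Fin n, ¬ (t.val < r) → q t = 0) ∧
        (fun k => (g j k : ℚ)) = ∑ t, q t • fun k => (g t k : ℚ))
    (i : Fin n)
    (hext : ¬ ∃ q : Fin n → ℚ, (∀ t, 0 ≤ q t) ∧
        (∀ t : Fin n, ¬ (t.val < r) → q t = 0) ∧ q i = 0 ∧
        (fun k => (g i k : ℚ)) = ∑ t, q t • fun k => (g t k : ℚ))
    (hgcd : Finset.univ.gcd (g i) = 1)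
    (C S : AddSubmonoid (Fin d → ℕ))
    (hC : C = AddSubmonoid.closure (Set.range g)) (hSC : S ≤ C)
    (A : Set (Fin d → ℕ))
    (hA : A = ((S : Set (Fin d → ℕ)) \ {0}) \
        ((((S : Set (Fin d → ℕ)) \ {0})) + (((S : Set (Fin d → ℕ)) \ {0}))))
    (Si : Set ℕ) (hSi : Si = {l : ℕ | l • g i ∈ S})
    (l : ℕ) (hl : l ∈ (Si \ {0}) \ ((Si \ {0}) + (Si \ {0}))) :
    l • g i ∈ A := by
  subst hC hA hSi
  obtain ⟨⟨hlS, hl0 : l ≠ 0⟩, hlns⟩ := hl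
  let cast : (Fin d → ℕ) →+ (Fin d → ℚ) := (Nat.castAddMonoidHom ℚ).compLeft (Fin d)
  let T : Set (Fin n) := {t | t.val < r}
  have hext' : cast (g i) ∉ coneOn ℚ (cast ∘ g) (T \ {i}) := fun ⟨q, hq0, hqT, hq⟩ =>
    hext ⟨q, hq0, fun t ht => hqT t fun h => ht h.1, hqT i fun h => h.2 rfl, hq⟩
  have hS : S ≤ (coneOn ℚ (cast ∘ g) T).comap cast :=
    hSC.trans <| AddSubmonoid.closure_le.mpr <| by rintro _ ⟨j, rfl⟩; exact hcone j
  have hray {x y : Fin d → ℕ} (hx : x ∈ S) (hy : y ∈ S) (hxy : x + y = l • g i) :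
      ∃ m : ℕ, x = m • g i := by
    obtain ⟨a, ha⟩ := exists_eq_smul_of_add_eq_smul (fun t k => Nat.cast_nonneg (g t k))
      (fun t h => hg t (funext fun k => by simpa [cast] using congrFun h k)) hext' (hS hx) (hS hy)
      (c := (l : ℚ)) (by rw [← map_add, hxy, map_nsmul, Nat.cast_smul_eq_nsmul]; rfl)
    exact exists_nsmul_eq_of_natCast_eq_smul hgcd (congrFun ha)
  refine ⟨⟨hlS, smul_ne_zero hl0 (hg i)⟩, ?_⟩
  rintro ⟨x, ⟨hxS, hx0⟩, y, ⟨hyS, hy0⟩, hxy⟩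
  obtain ⟨mx, rfl⟩ := hray hxS hyS hxy
  obtain ⟨my, rfl⟩ := hray hyS hxS ((add_comm _ _).trans hxy)
  obtain ⟨k, hk⟩ := Function.ne_iff.mp (hg i)
  refine hlns ⟨mx, ⟨hxS, ?_⟩, my, ⟨hyS, ?_⟩, ?_⟩
  · rintro rfl; exact hx0 (zero_smul ..)
  · rintro rfl; exact hy0 (zero_smul ..)
  · exact Nat.eq_of_mul_eq_mul_right (Nat.pos_of_ne_zero hk)
      (by simpa [add_mul] using congrFun hxy k)

/-- Let `C = ⟨g_1, …, g_n⟩ ⊆ ℕ^d` with all generators nonzero, the first `r` of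
which span the cone of all of them.  Fix `i < r` with `g_i` an extreme ray
(not in the cone of the other `g_t`, `t < r`) whose coordinates have gcd `1`.
If `S ⊆ C` is a submonoid with minimal generating set
`A = (S \ {0}) \ ((S \ {0}) + (S \ {0}))` and `S_i = {λ : λ·g_i ∈ S}`, then every
minimal generator `λ` of `S_i` satisfies `λ·g_i ∈ A`. -/
theorem stmt9 {d n : ℕ} (r : ℕ) (hr : r ≤ n) (g : Fin n → (Fin d → ℕ))
    (hg : ∀ j, g j ≠ 0)
    (hcone : ∀ j : Fin n, ∃ q : Fin n → ℚ, (∀ t, 0 ≤ q t) ∧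
        (∀ t : Fin n, ¬ (t.val < r) → q t = 0) ∧
        (fun k => (g j k : ℚ)) = ∑ t, q t • fun k => (g t k : ℚ))
    (i : Fin n) (hi : i.val < r)
    (hext : ¬ ∃ q : Fin n → ℚ, (∀ t, 0 ≤ q t) ∧
        (∀ t : Fin n, ¬ (t.val < r) → q t = 0) ∧ q i = 0 ∧
        (fun k => (g i k : ℚ)) = ∑ t, q t • fun k => (g t k : ℚ))
    (hgcd : Finset.univ.gcd (g i) = 1)
    (C S : AddSubmonoid (Fin d → ℕ))
    (hC : C = AddSubmonoid.closure (Set.range g)) (hSC : S ≤ C)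
    (A : Set (Fin d → ℕ))
    (hA : A = ((S : Set (Fin d → ℕ)) \ {0}) \
        ((((S : Set (Fin d → ℕ)) \ {0})) + (((S : Set (Fin d → ℕ)) \ {0}))))
    (Si : Set ℕ) (hSi : Si = {l : ℕ | l • g i ∈ S})
    (l : ℕ) (hl : l ∈ (Si \ {0}) \ ((Si \ {0}) + (Si \ {0}))) :
    l • g i ∈ A :=
  stmt9_general r g hg hcone i hext hgcd C S hC hSC A hA Si hSi l hl
end

section
/- Let S ⊆ ℕ^d be the additive submonoid generated by g_1, …, g_n with g_i ≠ 0 for every i, and let I be an ideal of S, i.e., I ⊆ S and I + S ⊆ I. Then S \ I is a finite set if and only if for every i ∈ {1,…,n} there exists k_i ∈ ℕ \ {0} such that k_i·g_i ∈ I. -/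
/-!
Write elements of `S` as `∑ c i • g i`. If `k i • g i ∈ I` for all `i`, then any such sum with
some `c i ≥ k i` lies in `k i • g i + S ⊆ I`, so `S \ I` lies in the image of the finite box
`∏ i, [0, k i)`. Conversely, a nonzero `g i ∈ ℕ^d` has pairwise distinct multiples, and
infinitely many of them cannot all avoid `I` when `S \ I` is finite.
-/

open Pointwise

theorem AddSubmonoid.exists_nsmul_mem_of_finite_diff {M : Type*} [AddMonoid M] [Preorder M]
    [AddLeftStrictMono M] {S : AddSubmonoid M} {I : Set M} (hfin : ((S : Set M) \ I).Finite)
    {s : M} (hs : s ∈ S) (hpos : 0 < s) : ∃ k : ℕ, k ≠ 0 ∧ k • s ∈ I := by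
  by_contra! hnot
  have hinj : Function.Injective fun k : ℕ => (k + 1) • s :=
    (nsmul_left_strictMono hpos).injective.comp (add_left_injective 1)
  exact Set.infinite_of_injective_forall_mem hinj
    (fun k => show (k + 1) • s ∈ (S : Set M) \ I from ⟨S.nsmul_mem hs _, hnot _ k.succ_ne_zero⟩)
    hfin

section Box

variable {M ι : Type*} [AddCommMonoid M] [Fintype ι] {g : ι → M} {I : Set M}

theorem sum_nsmul_mem_of_le (hideal : I + (AddSubmonoid.closure (Set.range g) : Set M) ⊆ I)
    {k : ι → ℕ} (hk : ∀ i, k i • g i ∈ I) {c : ι → ℕ} {i : ι} (hi : k i ≤ c i) :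
    ∑ j, c j • g j ∈ I := by
  classical
  have hsplit : c = Pi.single i (k i) + (c - Pi.single i (k i)) := by
    funext j
    rcases eq_or_ne j i with rfl | hj <;> simp [*]
  have hsingle : ∑ j, (Pi.single i (k i) : ι → ℕ) j • g j = k i • g i := by
    simp [Pi.single_apply, ite_smul]
  rw [hsplit]
  simp only [Pi.add_apply, add_smul, Finset.sum_add_distrib, hsingle]
  exact hideal (Set.add_mem_add (hk i)
    (AddSubmonoid.mem_closure_range_iff_of_fintype.mpr ⟨_, rfl⟩))

theorem closure_range_diff_subset_image_pi
    (hideal : I + (AddSubmonoid.closure (Set.range g) : Set M) ⊆ I)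
    {k : ι → ℕ} (hk : ∀ i, k i • g i ∈ I) :
    (AddSubmonoid.closure (Set.range g) : Set M) \ I ⊆
      (fun c : ι → ℕ => ∑ i, c i • g i) '' Set.univ.pi fun i => Set.Iio (k i) := by
  rintro x ⟨hxS, hxI⟩
  obtain ⟨c, rfl⟩ := AddSubmonoid.mem_closure_range_iff_of_fintype.mp hxS
  refine ⟨c, fun i _ => Set.mem_Iio.mpr ?_, rfl⟩
  by_contra! hi
  exact hxI (sum_nsmul_mem_of_le hideal hk hi)

theorem finite_closure_range_diff
    (hideal : I + (AddSubmonoid.closure (Set.range g) : Set M) ⊆ I)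
    {k : ι → ℕ} (hk : ∀ i, k i • g i ∈ I) :
    ((AddSubmonoid.closure (Set.range g) : Set M) \ I).Finite :=
  ((Set.Finite.pi fun i => Set.finite_Iio (k i)).image _).subset
    (closure_range_diff_subset_image_pi hideal hk)

end Box

theorem stmt10_general {d n : ℕ} (g : Fin n → (Fin d → ℕ)) (hg : ∀ i, g i ≠ 0)
    (S : AddSubmonoid (Fin d → ℕ)) (hS : S = AddSubmonoid.closure (Set.range g))
    (I : Set (Fin d → ℕ))
    (hideal : I + (S : Set (Fin d → ℕ)) ⊆ I) :
    ((S : Set (Fin d → ℕ)) \ I).Finite ↔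
      ∀ i : Fin n, ∃ k : ℕ, k ≠ 0 ∧ k • g i ∈ I := by
  subst hS
  refine ⟨fun hfin i => ?_, fun hk => ?_⟩
  · exact AddSubmonoid.exists_nsmul_mem_of_finite_diff hfin
      (AddSubmonoid.subset_closure (Set.mem_range_self i)) (pos_iff_ne_zero.mpr (hg i))
  · choose k _ hkI using hk
    exact finite_closure_range_diff hideal hkI

/-- Let `S = ⟨g_1, …, g_n⟩ ⊆ ℕ^d` with all `g_i ≠ 0` and let `I` be an ideal of
`S` (`I ⊆ S`, `I + S ⊆ I`). Then `S \ I` is finite iff for every `i` there is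
`k_i ≠ 0` with `k_i·g_i ∈ I`. -/
theorem stmt10 {d n : ℕ} (g : Fin n → (Fin d → ℕ)) (hg : ∀ i, g i ≠ 0)
    (S : AddSubmonoid (Fin d → ℕ)) (hS : S = AddSubmonoid.closure (Set.range g))
    (I : Set (Fin d → ℕ)) (hIS : I ⊆ (S : Set (Fin d → ℕ)))
    (hideal : I + (S : Set (Fin d → ℕ)) ⊆ I) :
    ((S : Set (Fin d → ℕ)) \ I).Finite ↔
      ∀ i : Fin n, ∃ k : ℕ, k ≠ 0 ∧ k • g i ∈ I :=
  stmt10_general g hg S hS I hideal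
end

section
/- Let S ⊆ ℕ^d be the additive submonoid generated by g_1, …, g_n with g_i ≠ 0 for every i, let f_S : ℕ^n → S be the monoid homomorphism sending (a_1, …, a_n) to Σ_{i=1}^n a_i g_i, and let I be an ideal of S. Then S \ I is finite if and only if ℕ^n \ f_S^{-1}(I) is finite. -/
open Pointwise

/-!
Every `s ∈ S` has finitely many preimages under `f_S`: since `g_i ≠ 0`, some coordinate of `g_i`
is positive, so `a_i` is bounded by the coordinate sum of `s`. A surjection `ℕ^n → S` with finite
fibres identifies `S \ I` with `f_S(ℕ^n \ f_S⁻¹(I))` and `ℕ^n \ f_S⁻¹(I)` with `f_S⁻¹(S \ I)`,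
so one is finite iff the other is.
-/

open Finset in
theorem Pi.le_sum_of_nsmul_le {κ : Type*} [Fintype κ] {v w : κ → ℕ} (hv : v ≠ 0) {k : ℕ}
    (h : k • v ≤ w) : k ≤ ∑ j, w j := by
  obtain ⟨j, hj⟩ := Function.ne_iff.1 hv
  calc k ≤ k * v j := Nat.le_mul_of_pos_right k (Nat.pos_of_ne_zero hj)
    _ ≤ w j := h j
    _ ≤ ∑ j, w j := single_le_sum (fun _ _ => Nat.zero_le _) (mem_univ j)

theorem finite_preimage_singleton_sum_nsmul {ι κ : Type*} [Fintype ι] [DecidableEq ι]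
    [Fintype κ] {g : ι → κ → ℕ} (hg : ∀ i, g i ≠ 0) (s : κ → ℕ) :
    ((fun a : ι → ℕ => ∑ i, a i • g i) ⁻¹' {s}).Finite := by
  refine (Set.finite_Iic fun _ => ∑ j, s j).subset ?_
  rintro a rfl i
  exact Pi.le_sum_of_nsmul_le (hg i)
    (Finset.single_le_sum (f := fun i => a i • g i) (fun _ _ => zero_le) (Finset.mem_univ i))

theorem range_sum_nsmul_eq_closure {ι M : Type*} [Fintype ι] [AddCommMonoid M] (g : ι → M) :
    Set.range (fun a : ι → ℕ => ∑ i, a i • g i) = AddSubmonoid.closure (Set.range g) := by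
  ext x
  simp only [Set.mem_range, SetLike.mem_coe, AddSubmonoid.mem_closure_range_iff_of_fintype,
    eq_comm]

theorem Set.finite_range_diff_iff_finite_compl_preimage {α β : Type*} {f : α → β}
    (hf : ∀ b, (f ⁻¹' {b}).Finite) (I : Set β) :
    (range f \ I).Finite ↔ (f ⁻¹' I)ᶜ.Finite := by
  have hcompl : (f ⁻¹' I)ᶜ = f ⁻¹' (range f \ I) := by
    rw [preimage_sdiff, preimage_range, compl_eq_univ_sdiff]
  rw [hcompl]
  refine ⟨fun h => h.preimage' fun b _ => hf b, fun h => ?_⟩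
  rw [← image_preimage_eq_of_subset sdiff_subset]
  exact h.image f

theorem stmt12_general {d n : ℕ} (g : Fin n → (Fin d → ℕ)) (hg : ∀ i, g i ≠ 0)
    (S : AddSubmonoid (Fin d → ℕ)) (hS : S = AddSubmonoid.closure (Set.range g))
    (I : Set (Fin d → ℕ)) :
    ((S : Set (Fin d → ℕ)) \ I).Finite ↔
      ({a : Fin n → ℕ | (∑ i, a i • g i) ∈ I}ᶜ).Finite := by
  subst hS
  rw [← range_sum_nsmul_eq_closure]
  exact Set.finite_range_diff_iff_finite_compl_preimage (finite_preimage_singleton_sum_nsmul hg) I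

/-- Let `S = ⟨g_1, …, g_n⟩ ⊆ ℕ^d` with all `g_i ≠ 0`, `f_S : ℕ^n → S` the map
`a ↦ Σ_i a_i g_i`, and `I` an ideal of `S`. Then `S \ I` is finite iff
`ℕ^n \ f_S⁻¹(I)` is finite. -/
theorem stmt12 {d n : ℕ} (g : Fin n → (Fin d → ℕ)) (hg : ∀ i, g i ≠ 0)
    (S : AddSubmonoid (Fin d → ℕ)) (hS : S = AddSubmonoid.closure (Set.range g))
    (I : Set (Fin d → ℕ)) (hIS : I ⊆ (S : Set (Fin d → ℕ)))
    (hideal : I + (S : Set (Fin d → ℕ)) ⊆ I) :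
    ((S : Set (Fin d → ℕ)) \ I).Finite ↔
      ({a : Fin n → ℕ | (∑ i, a i • g i) ∈ I}ᶜ).Finite :=
  stmt12_general g hg S hS I
end

section
/- Let K be a field, let S ⊆ ℕ^d be the additive submonoid generated by g_1, …, g_n, let ψ : K[Z_1,…,Z_n] → K[Y_1,…,Y_d] be the K-algebra homomorphism with ψ(Z_i) = Y^{g_i}, let J_S = ker ψ, let K[S] be the image of ψ, let u_1, …, u_r ∈ S with chosen factorizations a_k ∈ ℕ^n of u_k, let I_{K[S]} be the ideal of K[S] generated by Y^{u_1}, …, Y^{u_r}, let P_S = J_S + (Z^{a_1}, …, Z^{a_r}), and let ⪯ be a monomial order on K[Z_1,…,Z_n] with initial ideal in_⪯(P_S), the ideal generated by the ⪯-leading monomials of the nonzero elements of P_S. Then { Y^h : h ∈ S and Y^h ∉ I_{K[S]} } = { ψ(Z^t) : t ∈ ℕ^n and Z^t ∉ in_⪯(P_S) }. -/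
/-!
`ψ` sends `Z^t` to `Y^{φ t}` with `φ t = ∑ t_j g_j`; it maps `P_S` onto `I_{K[S]}` and kills
`J_S ⊆ P_S`. Hence `Z^t ∉ P_S` exactly when `ψ(Z^t) ∉ I_{K[S]}`, and `Z^t ∉ in_⪯(P_S)` implies
`Z^t ∉ P_S`. Conversely, for `h ∈ S` pick the `⪯`-least factorization `t` of `h` (term orders
refine divisibility, so Dickson's lemma makes them well founded). If `Z^t ∈ in_⪯(P_S)`, some
`q ∈ P_S` has leading term `Z^t`; every other monomial of `q` is `⪯`-smaller, hence not a
factorization of `h`, so `Y^h` occurs in `ψ q ∈ I_{K[S]}`. Since `I_{K[S]}` is spanned by monomials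
over the monomial algebra `K[S]`, it then contains `Y^h`.
-/

open MvPolynomial

section WellQuasiOrdered
variable {α : Type*} {r : α → α → Prop}

theorem WellQuasiOrdered.of_le_imp [LE α] [WellQuasiOrderedLE α] (h : ∀ x y, x ≤ y → r x y) :
    WellQuasiOrdered r := fun f =>
  (wellQuasiOrdered_le f).imp fun _ => Exists.imp fun _ => And.imp_right (h _ _)

theorem WellQuasiOrdered.exists_minimal [IsPartialOrder α r] (hr : WellQuasiOrdered r)
    {A : Set α} (hA : A.Nonempty) : ∃ t ∈ A, ∀ x ∈ A, r x t → x = t := by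
  obtain ⟨t, ht, hmin⟩ := hr.wellFounded.has_min A hA
  exact ⟨t, ht, fun x hx hxt =>
    by_contra fun hne => hmin x hx ⟨hxt, fun htx => hne (antisymm hxt htx)⟩⟩

theorem wellQuasiOrdered_of_zero_le_of_add_le_add [AddCommMonoid α] [PartialOrder α]
    [CanonicallyOrderedAdd α] [WellQuasiOrderedLE α] (hzero : ∀ v, r 0 v)
    (hadd : ∀ w v v' : α, r v v' → r (v + w) (v' + w)) : WellQuasiOrdered r :=
  .of_le_imp fun x _ h => by
    obtain ⟨c, rfl⟩ := le_iff_exists_add.mp h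
    simpa [add_comm] using hadd x 0 c (hzero c)

end WellQuasiOrdered

theorem AddSubmonoid.mem_closure_range_iff_exists_linearCombination {ι M : Type*}
    [AddCommMonoid M] {g : ι → M} {x : M} :
    x ∈ closure (Set.range g) ↔ ∃ t, Finsupp.linearCombination ℕ g t = x := by
  simp only [mem_closure_range_iff, Finsupp.linearCombination_apply, eq_comm]

theorem Finsupp.linearCombination_equivFunOnFinite_symm {ι κ R : Type*} [Semiring R] [Finite κ]
    (g : ι → κ → R) (t : ι →₀ R) :
    linearCombination R (fun i => equivFunOnFinite.symm (g i)) t =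
      equivFunOnFinite.symm (linearCombination R g t) := by
  ext x
  simp [linearCombination_apply, Finsupp.sum]

theorem Ideal.mem_of_map_mem_of_ker_le {A B : Type*} [CommRing A] [CommRing B] {f : A →+* B}
    (hf : Function.Surjective f) {I : Ideal A} (hI : RingHom.ker f ≤ I) {x : A}
    (hx : f x ∈ I.map f) : x ∈ I := by
  rwa [← Ideal.mem_comap, Ideal.comap_map_of_surjective' _ hf, sup_eq_left.mpr hI] at hx

theorem Ideal.map_rangeRestrict_ker_add_span {R A B ι : Type*} [CommSemiring R] [CommRing A]
    [CommRing B] [Algebra R A] [Algebra R B] (f : A →ₐ[R] B) {x : ι → A} {y : ι → B}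
    (hxy : ∀ k, f (x k) = y k) :
    Ideal.map f.rangeRestrict (RingHom.ker f + Ideal.span {a | ∃ k, a = x k}) =
      Ideal.span {b : f.range | ∃ k, (b : B) = y k} := by
  rw [Submodule.add_eq_sup, Ideal.map_sup, Ideal.map_span, sup_eq_right.mpr]
  · congr 1
    ext b
    constructor
    · rintro ⟨_, ⟨k, rfl⟩, rfl⟩
      exact ⟨k, hxy k⟩
    · rintro ⟨k, hk⟩
      exact ⟨_, ⟨k, rfl⟩, Subtype.ext (hk ▸ hxy k)⟩
  · rw [Ideal.map_le_iff_le_comap, ← AlgHom.ker_rangeRestrict]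
    exact (RingHom.ker_eq_comap_bot _).le.trans (Ideal.comap_mono bot_le)

section LeadingMonomials
variable {σ K : Type*} [Field K] {le : (σ →₀ ℕ) → (σ →₀ ℕ) → Prop}

theorem exists_monic_of_monomial_mem_span_leading
    (hadd : ∀ w v v' : σ →₀ ℕ, le v v' → le (v + w) (v' + w))
    {P : Ideal (MvPolynomial σ K)} {t : σ →₀ ℕ}
    (ht : monomial t 1 ∈ Ideal.span {m : MvPolynomial σ K | ∃ p ∈ P, p ≠ 0 ∧ ∃ s ∈ p.support,
      (∀ s' ∈ p.support, le s' s) ∧ m = monomial s 1}) :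
    ∃ q ∈ P, coeff t q = 1 ∧ ∀ v ∈ q.support, le v t := by
  have hset : {m : MvPolynomial σ K | ∃ p ∈ P, p ≠ 0 ∧ ∃ s ∈ p.support,
      (∀ s' ∈ p.support, le s' s) ∧ m = monomial s 1} =
      (monomial · 1) '' {s | ∃ p ∈ P, s ∈ p.support ∧ ∀ s' ∈ p.support, le s' s} := by
    ext m
    constructor
    · rintro ⟨p, hp, -, s, hs, hlead, rfl⟩
      exact ⟨s, ⟨p, hp, hs, hlead⟩, rfl⟩
    · rintro ⟨s, ⟨p, hp, hs, hlead⟩, rfl⟩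
      exact ⟨p, hp, support_nonempty.mp ⟨s, hs⟩, s, hs, hlead, rfl⟩
  rw [hset, mem_ideal_span_monomial_image] at ht
  obtain ⟨s, ⟨p, hp, hs, hlead⟩, hst⟩ := ht t (by classical simp)
  obtain ⟨w, rfl⟩ := le_iff_exists_add.mp hst
  refine ⟨monomial w (coeff s p)⁻¹ * p, P.mul_mem_left _ hp, ?_, fun v hv => ?_⟩
  · rw [add_comm, coeff_monomial_mul, inv_mul_cancel₀ (mem_support_iff.mp hs)]
  · rw [mem_support_iff, coeff_monomial_mul'] at hv
    split_ifs at hv with hwv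
    · have hv' : v - w ∈ p.support := mem_support_iff.mpr (right_ne_zero_of_mul hv)
      simpa [tsub_add_cancel_of_le hwv, add_comm w s] using hadd w _ _ (hlead _ hv')
    · exact absurd rfl hv

theorem monomial_mem_span_leading (hrefl : ∀ v, le v v) {P : Ideal (MvPolynomial σ K)}
    {t : σ →₀ ℕ} (ht : monomial t 1 ∈ P) :
    monomial t 1 ∈ Ideal.span {m : MvPolynomial σ K | ∃ p ∈ P, p ≠ 0 ∧ ∃ s ∈ p.support,
      (∀ s' ∈ p.support, le s' s) ∧ m = monomial s 1} :=
  Ideal.subset_span ⟨_, ht, monomial_eq_zero.not.mpr one_ne_zero, t, by classical simp,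
    fun s hs => by rw [Finset.mem_singleton.mp (support_monomial_subset hs)]; exact hrefl t, rfl⟩

end LeadingMonomials

namespace Subalgebra
variable {τ K ι : Type*} [CommSemiring K] {R : Subalgebra K (MvPolynomial τ K)}
  {M : AddSubmonoid (τ →₀ ℕ)} {U : ι → τ →₀ ℕ}

theorem exists_add_of_mem_support_of_mem_span_monomial
    (hR : ∀ f ∈ R, ∀ m ∈ f.support, m ∈ M) {x : R}
    (hx : x ∈ Ideal.span {y : R | ∃ k, (y : MvPolynomial τ K) = monomial (U k) 1})
    {m : τ →₀ ℕ} (hm : m ∈ (x : MvPolynomial τ K).support) : ∃ s ∈ M, ∃ k, m = s + U k := by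
  classical
  induction hx using Submodule.span_induction generalizing m with
  | mem y hy =>
    obtain ⟨k, hk⟩ := hy
    rw [hk] at hm
    rw [Finset.mem_singleton.mp (support_monomial_subset hm)]
    exact ⟨0, M.zero_mem, k, (zero_add _).symm⟩
  | zero => simp at hm
  | add y z _ _ hy hz =>
    rcases Finset.mem_union.mp (support_add hm) with hm | hm
    exacts [hy hm, hz hm]
  | smul c y _ hy =>
    obtain ⟨m₁, hm₁, m₂, hm₂, rfl⟩ := Finset.mem_add.mp (support_mul _ _ hm)
    obtain ⟨s, hs, k, rfl⟩ := hy hm₂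
    exact ⟨m₁ + s, M.add_mem (hR _ c.2 m₁ hm₁) hs, k, (add_assoc _ _ _).symm⟩

theorem monomial_mem_span_monomial_of_mem_support
    (hR : ∀ f ∈ R, ∀ m ∈ f.support, m ∈ M) (hM : ∀ m ∈ M, monomial m 1 ∈ R) (hU : ∀ k, U k ∈ M)
    {x : R} (hx : x ∈ Ideal.span {y : R | ∃ k, (y : MvPolynomial τ K) = monomial (U k) 1})
    {m : τ →₀ ℕ} (hm : m ∈ (x : MvPolynomial τ K).support) (hmR : monomial m 1 ∈ R) :
    (⟨monomial m 1, hmR⟩ : R) ∈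
      Ideal.span {y : R | ∃ k, (y : MvPolynomial τ K) = monomial (U k) 1} := by
  obtain ⟨s, hs, k, rfl⟩ := exists_add_of_mem_support_of_mem_span_monomial hR hx hm
  have hfactor : (⟨monomial (s + U k) 1, hmR⟩ : R) = ⟨_, hM s hs⟩ * ⟨_, hM _ (hU k)⟩ :=
    Subtype.ext (by simp [monomial_mul])
  rw [hfactor]
  exact Ideal.mul_mem_left _ _ (Ideal.subset_span ⟨k, rfl⟩)

end Subalgebra

namespace MvPolynomial
variable {σ τ K : Type*} {G : σ → τ →₀ ℕ}

section CommSemiring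
variable [CommSemiring K] {ψ : MvPolynomial σ K →ₐ[K] MvPolynomial τ K}

theorem map_monomial_of_map_X (hψ : ∀ i, ψ (X i) = monomial (G i) 1) (t : σ →₀ ℕ) (c : K) :
    ψ (monomial t c) = monomial (Finsupp.linearCombination ℕ G t) c := by
  rw [monomial_eq, map_mul, algHom_C, algebraMap_eq, Finsupp.prod, map_prod,
    Finsupp.linearCombination_apply, monomial_finsupp_sum_index]
  simp only [map_pow, hψ, monomial_pow, one_pow, Finsupp.prod]

theorem coeff_map_of_map_X [DecidableEq τ] (hψ : ∀ i, ψ (X i) = monomial (G i) 1)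
    (p : MvPolynomial σ K) (m : τ →₀ ℕ) :
    coeff m (ψ p) =
      ∑ v ∈ p.support, if Finsupp.linearCombination ℕ G v = m then coeff v p else 0 := by
  conv_lhs => rw [p.as_sum]
  simp only [map_sum, map_monomial_of_map_X hψ, coeff_sum, coeff_monomial]

theorem coeff_map_of_map_X_of_fiber (hψ : ∀ i, ψ (X i) = monomial (G i) 1)
    (p : MvPolynomial σ K) {t : σ →₀ ℕ}
    (ht : ∀ v ∈ p.support,
      Finsupp.linearCombination ℕ G v = Finsupp.linearCombination ℕ G t → v = t) :
    coeff (Finsupp.linearCombination ℕ G t) (ψ p) = coeff t p := by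
  classical
  rw [coeff_map_of_map_X hψ, Finset.sum_eq_single t (fun v hv hvt => if_neg (mt (ht v hv) hvt))
    (fun ht => by rw [if_pos rfl, notMem_support_iff.mp ht]), if_pos rfl]

theorem exists_eq_of_mem_support_map (hψ : ∀ i, ψ (X i) = monomial (G i) 1)
    {p : MvPolynomial σ K} {m : τ →₀ ℕ} (hm : m ∈ (ψ p).support) :
    ∃ v, Finsupp.linearCombination ℕ G v = m := by
  classical
  rw [mem_support_iff, coeff_map_of_map_X hψ] at hm
  obtain ⟨v, -, hv⟩ := Finset.exists_ne_zero_of_sum_ne_zero hm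
  exact ⟨v, by_contra fun h => hv (if_neg h)⟩

theorem monomial_mem_span_monomial_of_mem_support_map {ι : Type*} {U : ι → τ →₀ ℕ}
    (hψ : ∀ i, ψ (X i) = monomial (G i) 1)
    (hU : ∀ k, U k ∈ LinearMap.range (Finsupp.linearCombination ℕ G)) {x : ψ.range}
    (hx : x ∈ Ideal.span {y : ψ.range | ∃ k, (y : MvPolynomial τ K) = monomial (U k) 1})
    {m : τ →₀ ℕ} (hm : m ∈ (x : MvPolynomial τ K).support) (hmR : monomial m 1 ∈ ψ.range) :
    (⟨monomial m 1, hmR⟩ : ψ.range) ∈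
      Ideal.span {y : ψ.range | ∃ k, (y : MvPolynomial τ K) = monomial (U k) 1} :=
  Subalgebra.monomial_mem_span_monomial_of_mem_support
    (M := (LinearMap.range (Finsupp.linearCombination ℕ G)).toAddSubmonoid)
    (by rintro _ ⟨p, rfl⟩ m hm; exact exists_eq_of_mem_support_map hψ hm)
    (by rintro m ⟨t, rfl⟩; exact ⟨_, map_monomial_of_map_X hψ t 1⟩) hU hx hm hmR

end CommSemiring

theorem exists_mem_support_map_of_monomial_mem_span_leading [Field K]
    {ψ : MvPolynomial σ K →ₐ[K] MvPolynomial τ K} {le : (σ →₀ ℕ) → (σ →₀ ℕ) → Prop}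
    (hψ : ∀ i, ψ (X i) = monomial (G i) 1)
    (hadd : ∀ w v v' : σ →₀ ℕ, le v v' → le (v + w) (v' + w))
    {P : Ideal (MvPolynomial σ K)} {t : σ →₀ ℕ}
    (hmin : ∀ v, Finsupp.linearCombination ℕ G v = Finsupp.linearCombination ℕ G t →
      le v t → v = t)
    (ht : monomial t 1 ∈ Ideal.span {m : MvPolynomial σ K | ∃ p ∈ P, p ≠ 0 ∧ ∃ s ∈ p.support,
      (∀ s' ∈ p.support, le s' s) ∧ m = monomial s 1}) :
    ∃ q ∈ P, Finsupp.linearCombination ℕ G t ∈ (ψ q).support := by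
  obtain ⟨q, hqP, hqt, hqle⟩ := exists_monic_of_monomial_mem_span_leading hadd ht
  refine ⟨q, hqP, mem_support_iff.mpr ?_⟩
  rw [coeff_map_of_map_X_of_fiber hψ q fun v hv hvt => hmin v hvt (hqle v hv), hqt]
  exact one_ne_zero

end MvPolynomial

/-- With `ψ : K[Z] → K[Y]`, `Z_i ↦ Y^{g_i}`, `J_S = ker ψ`, `K[S] = range ψ`,
`I_{K[S]} = (Y^{u_1}, …, Y^{u_r})`, `P_S = J_S + (Z^{a_1}, …, Z^{a_r})` and a
monomial order `⪯` with initial ideal `in_⪯(P_S)`, the monomials `Y^h`, `h ∈ S`,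
outside `I_{K[S]}` are exactly the images `ψ(Z^t)` of the monomials `Z^t`
outside `in_⪯(P_S)`. -/
theorem stmt16 {d n r : ℕ} (K : Type*) [Field K]
    (g : Fin n → (Fin d → ℕ))
    (S : AddSubmonoid (Fin d → ℕ)) (hS : S = AddSubmonoid.closure (Set.range g))
    (ψ : MvPolynomial (Fin n) K →ₐ[K] MvPolynomial (Fin d) K)
    (hψ : ∀ i, ψ (X i) = monomial (Finsupp.equivFunOnFinite.symm (g i)) 1)
    (u : Fin r → (Fin d → ℕ)) (hu : ∀ k, u k ∈ S)
    (a : Fin r → (Fin n → ℕ)) (ha : ∀ k, ∑ j, a k j • g j = u k)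
    (IKS : Ideal ψ.range)
    (hIKS : IKS = Ideal.span {y : ψ.range |
        ∃ k, (y : MvPolynomial (Fin d) K) =
          monomial (Finsupp.equivFunOnFinite.symm (u k)) 1})
    (PS : Ideal (MvPolynomial (Fin n) K))
    (hPS : PS = RingHom.ker ψ + Ideal.span {m : MvPolynomial (Fin n) K |
        ∃ k, m = monomial (Finsupp.equivFunOnFinite.symm (a k)) 1})
    -- a monomial order on `K[Z_1,…,Z_n]`, given as a term order on the exponents
    (le : (Fin n →₀ ℕ) → (Fin n →₀ ℕ) → Prop)
    (hlin : IsLinearOrder (Fin n →₀ ℕ) le)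
    (hzero : ∀ v, le 0 v)
    (hadd : ∀ w v v' : Fin n →₀ ℕ, le v v' → le (v + w) (v' + w))
    -- the initial ideal of `P_S`: generated by the leading monomials of its
    -- nonzero elements
    (inPS : Ideal (MvPolynomial (Fin n) K))
    (hinPS : inPS = Ideal.span {m : MvPolynomial (Fin n) K |
        ∃ p ∈ PS, p ≠ 0 ∧ ∃ t ∈ p.support,
          (∀ s ∈ p.support, le s t) ∧ m = monomial t 1}) :
    {y : MvPolynomial (Fin d) K | ∃ h : Fin d → ℕ, h ∈ S ∧
        y = monomial (Finsupp.equivFunOnFinite.symm h) 1 ∧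
        ∀ hy : y ∈ ψ.range, (⟨y, hy⟩ : ψ.range) ∉ IKS} =
      {y : MvPolynomial (Fin d) K | ∃ t : Fin n →₀ ℕ,
        monomial t (1 : K) ∉ inPS ∧ y = ψ (monomial t 1)} := by
  have hmemS (h : Fin d → ℕ) : h ∈ S ↔ ∃ t, Finsupp.linearCombination ℕ
      (fun i => Finsupp.equivFunOnFinite.symm (g i)) t = Finsupp.equivFunOnFinite.symm h := by
    simp only [hS, AddSubmonoid.mem_closure_range_iff_exists_linearCombination,
      Finsupp.linearCombination_equivFunOnFinite_symm, Equiv.apply_eq_iff_eq]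
  have hψa (k : Fin r) : ψ (monomial (Finsupp.equivFunOnFinite.symm (a k)) 1) =
      monomial (Finsupp.equivFunOnFinite.symm (u k)) 1 := by
    rw [map_monomial_of_map_X hψ, Finsupp.linearCombination_equivFunOnFinite_symm, ← ha k,
      Finsupp.linearCombination_apply, Finsupp.sum_fintype _ _ (by simp)]
    rfl
  have hIKS_eq : IKS = Ideal.map ψ.rangeRestrict PS := by
    rw [hIKS, hPS, Ideal.map_rangeRestrict_ker_add_span _ hψa]
  ext y
  constructor
  · rintro ⟨h, hhS, rfl, hnot⟩
    have := hlin
    obtain ⟨t, ht, hmin⟩ := (wellQuasiOrdered_of_zero_le_of_add_le_add hzero hadd).exists_minimal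
      ((hmemS h).mp hhS)
    have hψt : ψ (monomial t 1) = monomial (Finsupp.equivFunOnFinite.symm h) 1 :=
      ht ▸ map_monomial_of_map_X hψ t 1
    refine ⟨t, fun htin => ?_, hψt.symm⟩
    obtain ⟨q, hqP, hq⟩ := exists_mem_support_map_of_monomial_mem_span_leading hψ hadd
      (fun v hv => hmin v (hv.trans ht)) (hinPS ▸ htin)
    rw [ht] at hq
    refine hnot ⟨_, hψt⟩ (hIKS ▸ monomial_mem_span_monomial_of_mem_support_map hψ
      (fun k => (hmemS _).mp (hu k)) (x := ψ.rangeRestrict q) ?_ hq _)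
    exact hIKS ▸ hIKS_eq ▸ Ideal.mem_map_of_mem _ hqP
  · rintro ⟨t, ht, rfl⟩
    refine ⟨_, (hmemS _).mpr ⟨t, (Finsupp.equivFunOnFinite_symm_coe _).symm⟩,
      by rw [map_monomial_of_map_X hψ, Finsupp.equivFunOnFinite_symm_coe], fun _ hmem => ht ?_⟩
    have hker : RingHom.ker ψ.rangeRestrict ≤ PS := by
      rw [AlgHom.ker_rangeRestrict, hPS, Submodule.add_eq_sup]
      exact le_sup_left
    exact hinPS ▸ monomial_mem_span_leading hlin.refl
      (Ideal.mem_of_map_mem_of_ker_le ψ.rangeRestrict_surjective hker (hIKS_eq ▸ hmem))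
end

section
/- Let S ⊆ ℕ^d be the additive submonoid generated by g_1, …, g_n with g_i ≠ 0 for every i, and let X ⊆ S. Then the Apéry set Ap(S, X) = {s ∈ S : s − x ∉ S for all x ∈ X} is finite if and only if for every i ∈ {1,…,n} there exists k_i ∈ ℕ \ {0} such that k_i·g_i ∈ X + S. -/
open Pointwise

/-! An element of the Apéry set has all its representations `∑ aᵢ • gᵢ` inside the box `aᵢ < kᵢ`:
if `aᵢ ≥ kᵢ`, then it is `kᵢ • gᵢ ∈ X + S` plus an element of `S`, and `X + S` is an ideal of `S`.
Conversely, if no positive multiple of `gᵢ` lies in `X + S`, all of them lie in the Apéry set, and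
they are pairwise distinct because `gᵢ ≠ 0` in the torsion-free monoid `ℕ^d`. -/

section Apery

variable {M : Type*}

def aperySet [AddMonoid M] (S : AddSubmonoid M) (X : Set M) : Set M :=
  (S : Set M) \ (X + S)

theorem setOf_eq_aperySet [AddMonoid M] (S : AddSubmonoid M) (X : Set M) :
    {s : M | s ∈ S ∧ ∀ x ∈ X, ¬ ∃ y ∈ S, s = x + y} = aperySet S X := by
  ext s
  simp [aperySet, Set.mem_add, eq_comm]

theorem add_mem_add_addSubmonoid [AddMonoid M] {S : AddSubmonoid M} {X : Set M} {s t : M}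
    (hs : s ∈ X + (S : Set M)) (ht : t ∈ S) : s + t ∈ X + (S : Set M) := by
  obtain ⟨x, hx, y, hy, rfl⟩ := hs
  exact ⟨x, hx, y + t, S.add_mem hy ht, (add_assoc x y t).symm⟩

theorem exists_nsmul_mem_add_of_aperySet_finite [AddLeftCancelMonoid M] {S : AddSubmonoid M}
    {X : Set M} (hfin : (aperySet S X).Finite) {g : M} (hgS : g ∈ S) (hg : ¬ IsOfFinAddOrder g) :
    ∃ k : ℕ, k ≠ 0 ∧ k • g ∈ X + (S : Set M) := by
  by_contra! hnot
  have hmem (m : ℕ) : (m + 1) • g ∈ aperySet S X :=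
    ⟨S.nsmul_mem hgS _, hnot (m + 1) m.succ_ne_zero⟩
  have hinj : Function.Injective fun m : ℕ => (m + 1) • g :=
    (injective_nsmul_iff_not_isOfFinAddOrder.mpr hg).comp (add_left_injective 1)
  exact Set.infinite_of_injective_forall_mem hinj hmem hfin

variable [AddCommMonoid M] {ι : Type*} [Fintype ι] {g : ι → M} {X : Set M}

theorem sum_nsmul_mem_add_closure_of_le {k a : ι → ℕ} {i : ι}
    (hk : k i • g i ∈ X + (AddSubmonoid.closure (Set.range g) : Set M)) (hle : k i ≤ a i) :
    ∑ j, a j • g j ∈ X + (AddSubmonoid.closure (Set.range g) : Set M) := by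
  classical
  set S := AddSubmonoid.closure (Set.range g)
  have hgS (j : ι) : g j ∈ S := AddSubmonoid.subset_closure ⟨j, rfl⟩
  have hsplit : ∑ j, a j • g j
      = k i • g i + ((a i - k i) • g i + ∑ j ∈ Finset.univ.erase i, a j • g j) := by
    rw [← add_assoc, ← add_nsmul, Nat.add_sub_cancel' hle,
      Finset.add_sum_erase _ (fun j => a j • g j) (Finset.mem_univ i)]
  rw [hsplit]
  exact add_mem_add_addSubmonoid hk <| S.add_mem (S.nsmul_mem (hgS i) _) <|
    S.sum_mem fun j _ => S.nsmul_mem (hgS j) _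

theorem aperySet_closure_finite {k : ι → ℕ}
    (hk : ∀ i, k i • g i ∈ X + (AddSubmonoid.closure (Set.range g) : Set M)) :
    (aperySet (AddSubmonoid.closure (Set.range g)) X).Finite := by
  have hbox : aperySet (AddSubmonoid.closure (Set.range g)) X ⊆
      (fun a : ι → ℕ => ∑ j, a j • g j) '' Set.univ.pi fun j => Set.Iio (k j) := by
    rintro s ⟨hsS, hsX⟩
    obtain ⟨a, rfl⟩ := AddSubmonoid.mem_closure_range_iff_of_fintype.mp hsS
    refine ⟨a, fun i _ => ?_, rfl⟩
    by_contra hle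
    exact hsX (sum_nsmul_mem_add_closure_of_le (hk i) (not_lt.mp hle))
  exact ((Set.Finite.pi fun j => Set.finite_Iio (k j)).image _).subset hbox

end Apery

theorem stmt18_general {d n : ℕ} (g : Fin n → (Fin d → ℕ)) (hg : ∀ i, g i ≠ 0)
    (S : AddSubmonoid (Fin d → ℕ)) (hS : S = AddSubmonoid.closure (Set.range g))
    (X : Set (Fin d → ℕ)) :
    {s : Fin d → ℕ | s ∈ S ∧ ∀ x ∈ X, ¬ ∃ y ∈ S, s = x + y}.Finite ↔
      ∀ i : Fin n, ∃ k : ℕ, k ≠ 0 ∧ k • g i ∈ X + (S : Set (Fin d → ℕ)) := by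
  subst hS
  rw [setOf_eq_aperySet]
  constructor
  · intro hfin i
    exact exists_nsmul_mem_add_of_aperySet_finite hfin (AddSubmonoid.subset_closure ⟨i, rfl⟩)
      (not_isOfFinAddOrder_of_isAddTorsionFree (hg i))
  · intro hk
    choose k _ hkX using hk
    exact aperySet_closure_finite hkX

/-- Let `S = ⟨g_1, …, g_n⟩ ⊆ ℕ^d` with all `g_i ≠ 0` and `X ⊆ S`. The Apéry set
`Ap(S, X) = {s ∈ S : s - x ∉ S for all x ∈ X}` is finite iff for every `i` there
is `k_i ≠ 0` with `k_i·g_i ∈ X + S`. -/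
theorem stmt18 {d n : ℕ} (g : Fin n → (Fin d → ℕ)) (hg : ∀ i, g i ≠ 0)
    (S : AddSubmonoid (Fin d → ℕ)) (hS : S = AddSubmonoid.closure (Set.range g))
    (X : Set (Fin d → ℕ)) (hX : X ⊆ (S : Set (Fin d → ℕ))) :
    {s : Fin d → ℕ | s ∈ S ∧ ∀ x ∈ X, ¬ ∃ y ∈ S, s = x + y}.Finite ↔
      ∀ i : Fin n, ∃ k : ℕ, k ≠ 0 ∧ k • g i ∈ X + (S : Set (Fin d → ℕ)) :=
  stmt18_general g hg S hS X
end

section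
/- Let S ⊆ ℕ^d be the additive submonoid generated by g_1, …, g_n with g_i ≠ 0 for every i, and suppose r ≤ n is such that cone({g_1,…,g_n}) = cone({g_1,…,g_r}), i.e., every g_j is a nonnegative rational linear combination of g_1, …, g_r. Let E = {g_1, …, g_r}. Then the Apéry set Ap(S, E) = {s ∈ S : s − g_i ∉ S for all i ∈ {1,…,r}} is a finite set. -/
/-!
Clearing denominators in the cone condition gives, for every generator `g j`, a positive
multiple `M j • g j` that is a nonzero `ℕ`-combination of the extreme rays, hence of the form
`g t + y` with `t < r` and `y ∈ S`. So an Apéry element cannot be written as `M j • g j` plus an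
element of `S`; writing it as `∑ a j • g j` forces `a j < M j` for all `j`, and it lies in the
finite box below `∑ M j • g j`.
-/

open Finset

theorem Rat.exists_natCast_eq_mul_of_den_dvd {q : ℚ} (hq : 0 ≤ q) {m : ℕ} (h : q.den ∣ m) :
    ∃ c : ℕ, (c : ℚ) = m * q := by
  obtain ⟨k, rfl⟩ := h
  refine ⟨q.num.toNat * k, ?_⟩
  have hnum : ((q.num.toNat : ℕ) : ℚ) = q.num := by
    exact_mod_cast Int.toNat_of_nonneg (Rat.num_nonneg.2 hq)
  push_cast
  rw [hnum, ← Rat.mul_den_eq_num]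
  ring

theorem exists_pos_nsmul_eq_sum_nsmul {ι κ : Type*} [Fintype ι] {v : κ → ℕ} {w : ι → κ → ℕ}
    {q : ι → ℚ} (hq : ∀ i, 0 ≤ q i) (h : (fun k => (v k : ℚ)) = ∑ i, q i • fun k => (w i k : ℚ)) :
    ∃ m : ℕ, 0 < m ∧ ∃ c : ι → ℕ, (∀ i, q i = 0 → c i = 0) ∧ m • v = ∑ i, c i • w i := by
  have hc : ∀ i, ∃ c : ℕ, (c : ℚ) = (∏ i, (q i).den : ℕ) * q i := fun i =>
    Rat.exists_natCast_eq_mul_of_den_dvd (hq i) (dvd_prod_of_mem _ (mem_univ i))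
  choose c hc using hc
  refine ⟨∏ i, (q i).den, prod_pos fun i _ => (q i).pos, c,
    fun i hi => (Nat.cast_eq_zero (R := ℚ)).1 (by rw [hc i, hi, mul_zero]), ?_⟩
  ext k
  apply Nat.cast_injective (R := ℚ)
  simp only [Pi.smul_apply, smul_eq_mul, Finset.sum_apply, Nat.cast_mul, Nat.cast_sum,
    congrFun h k, mul_sum, hc]
  exact sum_congr rfl fun i _ => by ring

namespace AddSubmonoid

variable {ι A : Type*} [Fintype ι] [AddCommMonoid A]

theorem exists_mem_closure_sum_nsmul_eq_nsmul_add [DecidableEq ι] (g : ι → A) {a : ι → ℕ}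
    {j : ι} {m : ℕ} (h : m ≤ a j) :
    ∃ y ∈ closure (Set.range g), ∑ i, a i • g i = m • g j + y := by
  set b : ι → ℕ := Pi.single j m
  refine ⟨∑ i, (a - b) i • g i, mem_closure_range_iff_of_fintype.2 ⟨_, rfl⟩, ?_⟩
  have hsplit : ∀ i, a i = b i + (a - b) i := fun i => by
    rcases eq_or_ne i j with rfl | hi <;> simp [b, *]
  conv_lhs => rw [funext hsplit]
  simp only [b, add_nsmul, sum_add_distrib, Pi.single_apply, ite_smul, zero_smul,
    Fintype.sum_ite_eq']

theorem exists_eq_sum_nsmul_lt_of_forall_not_eq_nsmul_add {g : ι → A} {s : A}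
    (hs : s ∈ closure (Set.range g)) (M : ι → ℕ)
    (h : ∀ j, ¬∃ y ∈ closure (Set.range g), s = M j • g j + y) :
    ∃ a : ι → ℕ, (∀ i, a i < M i) ∧ s = ∑ i, a i • g i := by
  classical
  obtain ⟨a, rfl⟩ := mem_closure_range_iff_of_fintype.1 hs
  exact ⟨a, fun i => not_le.1 fun hi => h i (exists_mem_closure_sum_nsmul_eq_nsmul_add g hi),
    rfl⟩

end AddSubmonoid

theorem exists_nsmul_eq_add_mem_closure_of_eq_sum_smul {ι κ : Type*} [Fintype ι]
    {g : ι → κ → ℕ} {j : ι} (hj : g j ≠ 0) {P : ι → Prop} {q : ι → ℚ} (hq : ∀ i, 0 ≤ q i)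
    (hqP : ∀ i, ¬P i → q i = 0) (h : (fun k => (g j k : ℚ)) = ∑ i, q i • fun k => (g i k : ℚ)) :
    ∃ m : ℕ, ∃ t, P t ∧ ∃ y ∈ AddSubmonoid.closure (Set.range g), m • g j = g t + y := by
  classical
  obtain ⟨m, hm, c, hc, hmc⟩ := exists_pos_nsmul_eq_sum_nsmul hq h
  obtain ⟨t, -, ht⟩ := exists_ne_zero_of_sum_ne_zero (hmc ▸ smul_ne_zero hm.ne' hj)
  have hct : c t ≠ 0 := fun h0 => ht (by rw [h0, zero_smul])
  obtain ⟨y, hy, hcy⟩ :=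
    AddSubmonoid.exists_mem_closure_sum_nsmul_eq_nsmul_add g (Nat.one_le_iff_ne_zero.2 hct)
  exact ⟨m, t, not_not.1 fun hPt => hct (hc t (hqP t hPt)), y, hy, by rw [hmc, hcy, one_smul]⟩

theorem stmt19_general {d n : ℕ} (r : ℕ) (g : Fin n → (Fin d → ℕ))
    (hg : ∀ i, g i ≠ 0)
    (hcone : ∀ j : Fin n, ∃ q : Fin n → ℚ, (∀ t, 0 ≤ q t) ∧
        (∀ t : Fin n, ¬ (t.val < r) → q t = 0) ∧
        (fun k => (g j k : ℚ)) = ∑ t, q t • fun k => (g t k : ℚ))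
    (S : AddSubmonoid (Fin d → ℕ)) (hS : S = AddSubmonoid.closure (Set.range g)) :
    {s : Fin d → ℕ | s ∈ S ∧ ∀ t : Fin n, t.val < r → ¬ ∃ y ∈ S, s = g t + y}.Finite := by
  subst hS
  have hmul (j : Fin n) : ∃ m : ℕ, ∃ t : Fin n, t.val < r ∧
      ∃ y ∈ AddSubmonoid.closure (Set.range g), m • g j = g t + y := by
    obtain ⟨q, hq, hqr, hj⟩ := hcone j
    exact exists_nsmul_eq_add_mem_closure_of_eq_sum_smul (hg j) hq hqr hj
  choose M t ht y hy hMy using hmul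
  refine (Set.finite_Iic (∑ j, M j • g j)).subset ?_
  rintro s ⟨hs, hAp⟩
  obtain ⟨a, ha, rfl⟩ := AddSubmonoid.exists_eq_sum_nsmul_lt_of_forall_not_eq_nsmul_add hs M
    fun j ⟨z, hz, hsz⟩ => hAp (t j) (ht j) ⟨y j + z, add_mem (hy j) hz, by rw [hsz, hMy, add_assoc]⟩
  exact sum_le_sum fun i _ => nsmul_le_nsmul_left (zero_le : 0 ≤ g i) (ha i).le

/-- Let `S = ⟨g_1, …, g_n⟩ ⊆ ℕ^d` with all `g_i ≠ 0`, such that the first `r`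
generators span the cone of all of them (a set of extreme rays `E`). Then the
Apéry set `Ap(S, E) = {s ∈ S : s - g_t ∉ S for all t < r}` is finite. -/
theorem stmt19 {d n : ℕ} (r : ℕ) (hr : r ≤ n) (g : Fin n → (Fin d → ℕ))
    (hg : ∀ i, g i ≠ 0)
    (hcone : ∀ j : Fin n, ∃ q : Fin n → ℚ, (∀ t, 0 ≤ q t) ∧
        (∀ t : Fin n, ¬ (t.val < r) → q t = 0) ∧
        (fun k => (g j k : ℚ)) = ∑ t, q t • fun k => (g t k : ℚ))
    (S : AddSubmonoid (Fin d → ℕ)) (hS : S = AddSubmonoid.closure (Set.range g)) :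
    {s : Fin d → ℕ | s ∈ S ∧ ∀ t : Fin n, t.val < r → ¬ ∃ y ∈ S, s = g t + y}.Finite :=
  stmt19_general r g hg hcone S hS
end
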